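/- arXiv:math/0310411 — 8 statements merged into one kernel-verified Lean document; each statement's English description precedes it below -/
import Mathlib

section
/- Every Eulerian orientation of the complete bipartite graph K_{m,n} (m, n even) contains at least m²n²/32 copies of the directed 4-cycle. -/
open Finset

/-- An orientation of `K_{m,n}`: `o a b = true` means the edge between left vertex `a` and
right vertex `b` is directed from `a` to `b`; it is Eulerian if every vertex has equal
indegree and outdegree. -/
def IsEulerianBip {m n : ℕ} (o : Fin m → Fin n → Bool) : Prop :=
  (∀ a : Fin m, 2 * (univ.filter fun b : Fin n => o a b = true).card = n) ∧
  (∀ b : Fin n, 2 * (univ.filter fun a : Fin m => o a b = true).card = m)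

/-- The four arcs spanned by the distinct left vertices `a₁, a₂` and the distinct right
vertices `b₁, b₂` form the directed 4-cycle `a₁ → b₁ → a₂ → b₂ → a₁` or its reverse. -/
def SpansC4 {m n : ℕ} (o : Fin m → Fin n → Bool) (a₁ a₂ : Fin m) (b₁ b₂ : Fin n) : Prop :=
  (o a₁ b₁ = true ∧ o a₂ b₁ = false ∧ o a₂ b₂ = true ∧ o a₁ b₂ = false) ∨
  (o a₁ b₁ = false ∧ o a₂ b₁ = true ∧ o a₂ b₂ = false ∧ o a₁ b₂ = true)

instance {m n : ℕ} (o : Fin m → Fin n → Bool) (a₁ a₂ : Fin m) (b₁ b₂ : Fin n) :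
    Decidable (SpansC4 o a₁ a₂ b₁ b₂) := by
  unfold SpansC4; infer_instance

/-- The number of copies of the directed 4-cycle in `o`, counted as subgraphs: each copy is
recorded once by taking `a₁ < a₂` and `b₁ < b₂`. -/
def numC4 {m n : ℕ} (o : Fin m → Fin n → Bool) : ℕ :=
  ((univ : Finset (Fin m × Fin m × Fin n × Fin n)).filter fun q =>
    q.1 < q.2.1 ∧ q.2.2.1 < q.2.2.2 ∧ SpansC4 o q.1 q.2.1 q.2.2.1 q.2.2.2).card

namespace C4Aux

variable {m n : ℕ}

/-- The number of left vertices `a` with `a → b₁` and `b₂ → a`. -/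
def XX (o : Fin m → Fin n → Bool) (b₁ b₂ : Fin n) : ℕ :=
  (univ.filter fun a : Fin m => o a b₁ = true ∧ o a b₂ = false).card

lemma spans_symm (o : Fin m → Fin n → Bool) (a₁ a₂ : Fin m) (b₁ b₂ : Fin n) :
    SpansC4 o a₂ a₁ b₁ b₂ ↔ SpansC4 o a₁ a₂ b₁ b₂ := by
  unfold SpansC4; tauto

lemma spans_ne {o : Fin m → Fin n → Bool} {a₁ a₂ : Fin m} {b₁ b₂ : Fin n}
    (h : SpansC4 o a₁ a₂ b₁ b₂) : a₁ ≠ a₂ := by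
  rintro rfl
  rcases h with ⟨h1, h2, _, _⟩ | ⟨h1, h2, _, _⟩ <;> simp [h1] at h2

lemma spans_split (o : Fin m → Fin n → Bool) (a₁ a₂ : Fin m) (b₁ b₂ : Fin n) :
    (if SpansC4 o a₁ a₂ b₁ b₂ then 1 else 0)
      = (if o a₁ b₁ = true ∧ o a₁ b₂ = false then 1 else 0) *
          (if o a₂ b₁ = false ∧ o a₂ b₂ = true then 1 else 0)
        + (if o a₁ b₁ = false ∧ o a₁ b₂ = true then 1 else 0) *
            (if o a₂ b₁ = true ∧ o a₂ b₂ = false then 1 else 0) := by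
  unfold SpansC4
  rcases (o a₁ b₁).eq_false_or_eq_true with h1 | h1 <;>
    rcases (o a₂ b₁).eq_false_or_eq_true with h2 | h2 <;>
      rcases (o a₂ b₂).eq_false_or_eq_true with h3 | h3 <;>
        rcases (o a₁ b₂).eq_false_or_eq_true with h4 | h4 <;>
          simp [h1, h2, h3, h4]

lemma sum_ite_fst (o : Fin m → Fin n → Bool) (b₁ b₂ : Fin n) :
    (∑ a : Fin m, if o a b₁ = true ∧ o a b₂ = false then 1 else 0) = XX o b₁ b₂ := by
  rw [XX, card_filter]

lemma sum_ite_snd (o : Fin m → Fin n → Bool) (b₁ b₂ : Fin n) :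
    (∑ a : Fin m, if o a b₁ = false ∧ o a b₂ = true then 1 else 0) = XX o b₂ b₁ := by
  rw [XX, card_filter]
  exact Finset.sum_congr rfl fun a _ => if_congr and_comm rfl rfl

lemma inner_count (o : Fin m → Fin n → Bool) (b₁ b₂ : Fin n) :
    (∑ a₁ : Fin m, ∑ a₂ : Fin m,
      if a₁ < a₂ ∧ SpansC4 o a₁ a₂ b₁ b₂ then 1 else 0)
      = XX o b₁ b₂ * XX o b₂ b₁ := by
  classical
  have key : ∀ a₁ a₂ : Fin m,
      ((if a₁ < a₂ ∧ SpansC4 o a₁ a₂ b₁ b₂ then 1 else 0)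
        + (if a₂ < a₁ ∧ SpansC4 o a₁ a₂ b₁ b₂ then 1 else 0))
      = (if SpansC4 o a₁ a₂ b₁ b₂ then 1 else 0) := by
    intro a₁ a₂
    by_cases hs : SpansC4 o a₁ a₂ b₁ b₂
    · rcases (spans_ne hs).lt_or_gt with h | h
      · simp [hs, h, h.asymm]
      · simp [hs, h, h.asymm]
    · simp [hs]
  have hswap : (∑ a₁ : Fin m, ∑ a₂ : Fin m,
        if a₂ < a₁ ∧ SpansC4 o a₁ a₂ b₁ b₂ then 1 else 0)
      = ∑ a₁ : Fin m, ∑ a₂ : Fin m,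
        if a₁ < a₂ ∧ SpansC4 o a₁ a₂ b₁ b₂ then 1 else 0 := by
    rw [Finset.sum_comm]
    refine Finset.sum_congr rfl fun a₁ _ => Finset.sum_congr rfl fun a₂ _ => ?_
    exact if_congr (and_congr Iff.rfl (spans_symm o a₁ a₂ b₁ b₂)) rfl rfl
  have hsplit : (∑ a₁ : Fin m, ∑ a₂ : Fin m,
        if SpansC4 o a₁ a₂ b₁ b₂ then 1 else 0)
      = XX o b₁ b₂ * XX o b₂ b₁ + XX o b₂ b₁ * XX o b₁ b₂ := by
    simp_rw [spans_split o _ _ b₁ b₂]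
    rw [Finset.sum_congr rfl fun a₁ _ => Finset.sum_add_distrib]
    rw [Finset.sum_add_distrib]
    congr 1
    · simp_rw [← Finset.mul_sum, ← Finset.sum_mul]
      rw [sum_ite_fst, sum_ite_snd]
    · simp_rw [← Finset.mul_sum, ← Finset.sum_mul]
      rw [sum_ite_fst, sum_ite_snd]
  have h2 : (∑ a₁ : Fin m, ∑ a₂ : Fin m,
        if a₁ < a₂ ∧ SpansC4 o a₁ a₂ b₁ b₂ then 1 else 0)
      + (∑ a₁ : Fin m, ∑ a₂ : Fin m,
        if a₁ < a₂ ∧ SpansC4 o a₁ a₂ b₁ b₂ then 1 else 0)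
      = XX o b₁ b₂ * XX o b₂ b₁ + XX o b₂ b₁ * XX o b₁ b₂ := by
    nth_rewrite 2 [← hswap]
    rw [← hsplit, ← Finset.sum_add_distrib]
    refine Finset.sum_congr rfl fun a₁ _ => ?_
    rw [← Finset.sum_add_distrib]
    exact Finset.sum_congr rfl fun a₂ _ => key a₁ a₂
  have hmul : XX o b₂ b₁ * XX o b₁ b₂ = XX o b₁ b₂ * XX o b₂ b₁ := Nat.mul_comm _ _
  omega

lemma XX_self (o : Fin m → Fin n → Bool) (b : Fin n) : XX o b b = 0 := by
  rw [XX, Finset.card_eq_zero, Finset.filter_eq_empty_iff]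
  intro a _
  rintro ⟨h1, h2⟩
  rw [h1] at h2
  exact Bool.noConfusion h2

lemma sum_comm4 {α β : Type*} [Fintype α] [Fintype β] (f : α → α → β → β → ℕ) :
    (∑ a₁ : α, ∑ a₂ : α, ∑ b₁ : β, ∑ b₂ : β, f a₁ a₂ b₁ b₂)
      = ∑ b₁ : β, ∑ b₂ : β, ∑ a₁ : α, ∑ a₂ : α, f a₁ a₂ b₁ b₂ := by
  rw [show (∑ a₁ : α, ∑ a₂ : α, ∑ b₁ : β, ∑ b₂ : β, f a₁ a₂ b₁ b₂)
      = ∑ a₁ : α, ∑ b₁ : β, ∑ a₂ : α, ∑ b₂ : β, f a₁ a₂ b₁ b₂ from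
    Finset.sum_congr rfl fun a₁ _ => Finset.sum_comm]
  rw [Finset.sum_comm]
  refine Finset.sum_congr rfl fun b₁ _ => ?_
  rw [show (∑ a₁ : α, ∑ a₂ : α, ∑ b₂ : β, f a₁ a₂ b₁ b₂)
      = ∑ a₁ : α, ∑ b₂ : β, ∑ a₂ : α, f a₁ a₂ b₁ b₂ from
    Finset.sum_congr rfl fun a₁ _ => Finset.sum_comm]
  rw [Finset.sum_comm]

lemma numC4_eq (o : Fin m → Fin n → Bool) :
    numC4 o = ∑ b₁ : Fin n, ∑ b₂ : Fin n,
      if b₁ < b₂ then XX o b₁ b₂ * XX o b₂ b₁ else 0 := by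
  classical
  rw [numC4, card_filter, Fintype.sum_prod_type]
  simp_rw [Fintype.sum_prod_type]
  rw [sum_comm4 (f := fun a₁ a₂ b₁ b₂ =>
    if a₁ < a₂ ∧ b₁ < b₂ ∧ SpansC4 o a₁ a₂ b₁ b₂ then 1 else 0)]
  refine Finset.sum_congr rfl fun b₁ _ => Finset.sum_congr rfl fun b₂ _ => ?_
  by_cases hb : b₁ < b₂
  · rw [if_pos hb, ← inner_count o b₁ b₂]
    refine Finset.sum_congr rfl fun a₁ _ => Finset.sum_congr rfl fun a₂ _ => ?_
    refine if_congr ?_ rfl rfl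
    constructor
    · rintro ⟨h1, _, h3⟩; exact ⟨h1, h3⟩
    · rintro ⟨h1, h3⟩; exact ⟨h1, hb, h3⟩
  · rw [if_neg hb]
    refine Finset.sum_eq_zero fun a₁ _ => Finset.sum_eq_zero fun a₂ _ => ?_
    rw [if_neg]; rintro ⟨_, h2, _⟩; exact hb h2

lemma two_numC4 (o : Fin m → Fin n → Bool) :
    2 * numC4 o = ∑ b₁ : Fin n, ∑ b₂ : Fin n, XX o b₁ b₂ * XX o b₂ b₁ := by
  classical
  have h1 : numC4 o = ∑ b₁ : Fin n, ∑ b₂ : Fin n,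
      if b₂ < b₁ then XX o b₁ b₂ * XX o b₂ b₁ else 0 := by
    rw [numC4_eq o, Finset.sum_comm]
    refine Finset.sum_congr rfl fun b₁ _ => Finset.sum_congr rfl fun b₂ _ => ?_
    rw [Nat.mul_comm]
  have key : ∀ b₁ b₂ : Fin n,
      ((if b₁ < b₂ then XX o b₁ b₂ * XX o b₂ b₁ else 0)
        + (if b₂ < b₁ then XX o b₁ b₂ * XX o b₂ b₁ else 0))
      = XX o b₁ b₂ * XX o b₂ b₁ := by
    intro b₁ b₂
    rcases lt_trichotomy b₁ b₂ with h | h | h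
    · simp [h, h.asymm]
    · subst h; simp [XX_self]
    · simp [h, h.asymm]
  calc 2 * numC4 o = numC4 o + numC4 o := by ring
    _ = ∑ b₁ : Fin n, ∑ b₂ : Fin n, XX o b₁ b₂ * XX o b₂ b₁ := by
      nth_rewrite 2 [h1]
      rw [numC4_eq o, ← Finset.sum_add_distrib]
      refine Finset.sum_congr rfl fun b₁ _ => ?_
      rw [← Finset.sum_add_distrib]
      exact Finset.sum_congr rfl fun b₂ _ => key b₁ b₂

lemma XX_symm (o : Fin m → Fin n → Bool) (ho : IsEulerianBip o) (b₁ b₂ : Fin n) :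
    XX o b₁ b₂ = XX o b₂ b₁ := by
  classical
  have key : ∀ c₁ c₂ : Fin n,
      (univ.filter fun a : Fin m => o a c₁ = true ∧ o a c₂ = true).card + XX o c₁ c₂
        = (univ.filter fun a : Fin m => o a c₁ = true).card := by
    intro c₁ c₂
    rw [XX]
    have h := Finset.card_filter_add_card_filter_not
      (s := univ.filter fun a : Fin m => o a c₁ = true) (p := fun a => o a c₂ = true)
    rw [filter_filter, filter_filter] at h
    simpa [Bool.not_eq_true] using h
  have h1 := key b₁ b₂
  have h2 := key b₂ b₁
  have hcomm : (univ.filter fun a : Fin m => o a b₁ = true ∧ o a b₂ = true)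
      = (univ.filter fun a : Fin m => o a b₂ = true ∧ o a b₁ = true) := by
    apply Finset.filter_congr; intro a _; exact and_comm
  have e1 := ho.2 b₁
  have e2 := ho.2 b₂
  rw [hcomm] at h1
  omega

lemma row_sum (o : Fin m → Fin n → Bool) (ho : IsEulerianBip o) (b₁ : Fin n) :
    4 * ∑ b₂ : Fin n, XX o b₁ b₂ = m * n := by
  classical
  have hF : ∀ a : Fin m, 2 * (univ.filter fun b : Fin n => o a b = false).card = n := by
    intro a
    have h := Finset.card_filter_add_card_filter_not
      (s := (univ : Finset (Fin n))) (p := fun b => o a b = true)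
    simp only [Bool.not_eq_true, Finset.card_univ, Fintype.card_fin] at h
    have h1 := ho.1 a
    omega
  have hswap : ∑ b₂ : Fin n, XX o b₁ b₂
      = ∑ a : Fin m, (if o a b₁ = true
          then (univ.filter fun b : Fin n => o a b = false).card else 0) := by
    simp_rw [XX, card_filter]
    rw [Finset.sum_comm]
    refine Finset.sum_congr rfl fun a _ => ?_
    by_cases h : o a b₁ = true
    · rw [if_pos h]
      exact Finset.sum_congr rfl fun b _ => by simp [h]
    · rw [if_neg h]
      exact Finset.sum_eq_zero fun b _ => by simp [h]
  have h2 : 2 * ∑ b₂ : Fin n, XX o b₁ b₂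
      = (univ.filter fun a : Fin m => o a b₁ = true).card * n := by
    rw [hswap, Finset.mul_sum]
    rw [show (∑ a : Fin m, 2 * (if o a b₁ = true
        then (univ.filter fun b : Fin n => o a b = false).card else 0))
      = ∑ a : Fin m, (if o a b₁ = true then n else 0) from
      Finset.sum_congr rfl fun a _ => by
        by_cases h : o a b₁ = true
        · rw [if_pos h, if_pos h, hF a]
        · simp [h]]
    rw [← Finset.sum_filter, Finset.sum_const, smul_eq_mul]
  have h3 := ho.2 b₁
  calc 4 * ∑ b₂ : Fin n, XX o b₁ b₂
      = 2 * (2 * ∑ b₂ : Fin n, XX o b₁ b₂) := by ring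
    _ = 2 * ((univ.filter fun a : Fin m => o a b₁ = true).card * n) := by rw [h2]
    _ = (2 * (univ.filter fun a : Fin m => o a b₁ = true).card) * n := by ring
    _ = m * n := by rw [h3]

end C4Aux

/-- Every Eulerian orientation of `K_{m,n}` (`m`, `n` even) contains at least `m²n²/32`
copies of the directed 4-cycle. -/
theorem count_C4_eulerian_bipartite (m n : ℕ) (hm : Even m) (hn : Even n)
    (o : Fin m → Fin n → Bool) (ho : IsEulerianBip o) :
    (m : ℝ) ^ 2 * (n : ℝ) ^ 2 / 32 ≤ (numC4 o : ℝ) := by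
  classical
  set f : Fin n × Fin n → ℝ := fun p => (C4Aux.XX o p.1 p.2 : ℝ) with hf
  have hCS := sq_sum_le_card_mul_sum_sq (s := (univ : Finset (Fin n × Fin n))) (f := f)
  have hcard : ((univ : Finset (Fin n × Fin n)).card : ℝ) = (n : ℝ) ^ 2 := by
    simp [Finset.card_univ]
    ring
  have hrow : ∀ b₁ : Fin n, (∑ b₂ : Fin n, f (b₁, b₂)) * 4 = (m : ℝ) * n := by
    intro b₁
    have h := C4Aux.row_sum o ho b₁
    have h2 : ((4 * ∑ b₂ : Fin n, C4Aux.XX o b₁ b₂ : ℕ) : ℝ) = ((m * n : ℕ) : ℝ) := by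
      rw [h]
    push_cast at h2
    rw [hf]
    simp only
    linarith
  have hsum : (∑ p : Fin n × Fin n, f p) * 4 = (n : ℝ) * ((m : ℝ) * n) := by
    rw [Fintype.sum_prod_type, Finset.sum_mul,
      Finset.sum_congr rfl fun b₁ _ => hrow b₁,
      Finset.sum_const, Finset.card_univ, Fintype.card_fin, nsmul_eq_mul]
  have hsq : ∑ p : Fin n × Fin n, f p ^ 2 = 2 * (numC4 o : ℝ) := by
    have hN := C4Aux.two_numC4 o
    have h2 : ((2 * numC4 o : ℕ) : ℝ)
        = ((∑ b₁ : Fin n, ∑ b₂ : Fin n, C4Aux.XX o b₁ b₂ * C4Aux.XX o b₂ b₁ : ℕ) : ℝ) := by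
      rw [hN]
    push_cast at h2
    rw [Fintype.sum_prod_type]
    rw [show (∑ b₁ : Fin n, ∑ b₂ : Fin n, f (b₁, b₂) ^ 2)
        = ∑ b₁ : Fin n, ∑ b₂ : Fin n, (C4Aux.XX o b₁ b₂ : ℝ) * (C4Aux.XX o b₂ b₁ : ℝ) from
      Finset.sum_congr rfl fun b₁ _ => Finset.sum_congr rfl fun b₂ _ => by
        rw [hf]
        simp only
        rw [C4Aux.XX_symm o ho b₂ b₁]
        ring]
    linarith
  rw [hcard, hsq] at hCS
  rw [div_le_iff₀ (by norm_num : (0:ℝ) < 32)]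
  rcases Nat.eq_zero_or_pos n with hn0 | hn0
  · subst hn0
    simp
  · have hnr : (0 : ℝ) < (n : ℝ) := by exact_mod_cast hn0
    have hnpos : (0 : ℝ) < (n : ℝ) ^ 2 := pow_pos hnr 2
    have hsum2 : ((∑ p : Fin n × Fin n, f p) * 4) ^ 2 = ((n : ℝ) * ((m : ℝ) * n)) ^ 2 := by
      rw [hsum]
    nlinarith [hCS, hsum2, hnpos, (Nat.cast_nonneg (numC4 o) : (0:ℝ) ≤ (numC4 o : ℝ))]
end

section
/- Let G be an Eulerian orientation of K_{m,n} (m, n even). For an arc e = (x,y) of G, let d(e) be the number of arcs of G going from the out-neighborhood N⁺(y) of y to the in-neighborhood N⁻(x) of x, let α(e) = min{d(e)/(mn), 1/4 − d(e)/(mn)}, and let α(G) = min over all arcs e of α(e). Then G contains at least m²n²·(1/16 − α(G) + 4·α(G)²) copies of the directed 4-cycle. -/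
open Finset

/-- For the arc `e` of `o` lying on the edge between `a` and `b` (directed according to `o`),
with `e = (x,y)`, `dArc o a b` is the number of arcs of `o` going from the out-neighborhood
`N⁺(y)` to the in-neighborhood `N⁻(x)`.  If `o a b = true` then `x = a`, `y = b`,
`N⁺(b) = {a' | o a' b = false}` and `N⁻(a) = {b' | o a b' = false}`, and an arc from `N⁺(b)`
to `N⁻(a)` is a pair `(a', b')` there with `o a' b' = true`; the other case is symmetric. -/
def dArc {m n : ℕ} (o : Fin m → Fin n → Bool) (a : Fin m) (b : Fin n) : ℕ :=
  if o a b = true then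
    ((univ : Finset (Fin m × Fin n)).filter fun p =>
      o p.1 b = false ∧ o a p.2 = false ∧ o p.1 p.2 = true).card
  else
    ((univ : Finset (Fin m × Fin n)).filter fun p =>
      o p.1 b = true ∧ o a p.2 = true ∧ o p.1 p.2 = false).card

/-- `α(e) = min{d(e)/(mn), 1/4 − d(e)/(mn)}` for the arc `e` on the edge between `a` and `b`. -/
noncomputable def alphaArc {m n : ℕ} (o : Fin m → Fin n → Bool) (a : Fin m) (b : Fin n) : ℝ :=
  min ((dArc o a b : ℝ) / (m * n)) (1 / 4 - (dArc o a b : ℝ) / (m * n))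

/-!
Fix an arc `e` on the edge between `a` and `b`, and let `X i` be the number of directed 2-paths
`i → · → a`. All left vertices have the same outdegree, so the number `s i j` of 2-paths
`i → · → j` equals `s j i`. The middle vertex `c` of a 2-path `i → c → a` is either an
out-neighbour of `j`, giving `j → c → a`, or an in-neighbour, giving `i → c → j`; hence
`|X i - X j| ≤ s i j`. Each pair of 2-paths `i → · → j → · → i`
closes a directed 4-cycle, so `∑ s i j * s j i` over pairs `i ∈ A`, `j ∈ B` from two disjoint sets
is at most the number of 4-cycles.

The edges between `b` and the left class split it into halves `A` (oriented against the edge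
`ab`) and `B` (oriented like it), each of size `m / 2`. Then `d(e) = ∑_A X` and
`∑_A X + ∑_B X = mn / 4`, so `8 d(e) - mn = 4 (∑_A X - ∑_B X)`, and Cauchy–Schwarz over `A × B`
gives `(∑_A X - ∑_B X)² ≤ ∑_{A × B} (X i - X j)² ≤ #C4`. Finally
`m²n²(1/16 - α + 4α²) = (mn (1/4 - 2α))² = (8 d(e) - mn)² / 16` for both values of `α(e)`.
-/

theorem two_mul_card_filter_eq_of_two_mul_card_filter_true {k : ℕ} (f : Fin k → Bool)
    (h : 2 * #(univ.filter fun i => f i = true) = k) (c : Bool) :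
    2 * #(univ.filter fun i => f i = c) = k := by
  cases c
  · have := card_filter_add_card_filter_not (s := univ) (fun i => f i = true)
    simp only [Bool.not_eq_true, card_univ, Fintype.card_fin] at this
    omega
  · exact h

theorem eq_and_eq_or_eq_and_eq_of_min_eq_of_max_eq {α : Type*} [LinearOrder α] {x y x' y' : α}
    (hmin : min x y = min x' y') (hmax : max x y = max x' y') :
    x = x' ∧ y = y' ∨ x = y' ∧ y = x' := by
  rcases le_total x y with h | h <;> rcases le_total x' y' with h' | h' <;>
    simp only [min_eq_left, min_eq_right, max_eq_left, max_eq_right, h, h'] at hmin hmax <;>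
    grind

theorem sq_sum_sub_sum_le {ι : Type*} {A B : Finset ι} (f : ι → ℝ) (hAB : #A = #B) :
    (∑ i ∈ A, f i - ∑ j ∈ B, f j) ^ 2 ≤ ∑ i ∈ A, ∑ j ∈ B, (f i - f j) ^ 2 := by
  have hsum : (#A : ℝ) * (∑ i ∈ A, f i - ∑ j ∈ B, f j) = ∑ p ∈ A ×ˢ B, (f p.1 - f p.2) := by
    simp only [sum_product, sum_sub_distrib, sum_const, nsmul_eq_mul, ← mul_sum, hAB]
    ring
  have hcs := sq_sum_le_card_mul_sum_sq (s := A ×ˢ B) (f := fun p => f p.1 - f p.2)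
  rw [← hsum, card_product, hAB, sum_product] at hcs
  rcases (#B).eq_zero_or_pos with hB | hB
  · simp [card_eq_zero.1 hB, card_eq_zero.1 (hAB.trans hB)]
  · have : (0 : ℝ) < #B ^ 2 := by positivity
    push_cast at hcs
    nlinarith

section

variable {m n : ℕ} (o : Fin m → Fin n → Bool)

def twoPaths (a₁ a₂ : Fin m) : Finset (Fin n) :=
  univ.filter fun b => o a₁ b = true ∧ o a₂ b = false

theorem card_twoPaths_comm {a₁ a₂ : Fin m}
    (h : #(univ.filter fun b => o a₁ b = true) = #(univ.filter fun b => o a₂ b = true)) :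
    #(twoPaths o a₁ a₂) = #(twoPaths o a₂ a₁) := by
  have split : ∀ u v : Fin m, #(univ.filter fun b => o u b = true) =
      #(univ.filter fun b => o u b = true ∧ o v b = true) + #(twoPaths o u v) := by
    intro u v
    rw [← card_filter_add_card_filter_not (fun b => o v b = true), filter_filter, filter_filter]
    simp [twoPaths]
  have h₁ := split a₁ a₂
  have h₂ := split a₂ a₁
  simp_rw [and_comm (a := o a₂ _ = true)] at h₂
  omega

theorem card_twoPaths_comm_of_row_regular
    (hrow : ∀ a, 2 * #(univ.filter fun b => o a b = true) = n) (a₁ a₂ : Fin m) :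
    #(twoPaths o a₁ a₂) = #(twoPaths o a₂ a₁) :=
  card_twoPaths_comm o (by have := hrow a₁; have := hrow a₂; omega)

theorem card_twoPaths_le_add (a a₁ a₂ : Fin m) :
    #(twoPaths o a₂ a) ≤ #(twoPaths o a₂ a₁) + #(twoPaths o a₁ a) := by
  refine (card_le_card fun b hb => ?_).trans (card_union_le _ _)
  simp only [twoPaths, mem_union, mem_filter, mem_univ, true_and] at hb ⊢
  cases o a₁ b <;> simp [hb]

theorem sq_sub_card_twoPaths_le
    (hrow : ∀ a, 2 * #(univ.filter fun b => o a b = true) = n) (a a₁ a₂ : Fin m) :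
    ((#(twoPaths o a₁ a) : ℝ) - #(twoPaths o a₂ a)) ^ 2 ≤
      #(twoPaths o a₁ a₂) * #(twoPaths o a₂ a₁) := by
  have hsymm := card_twoPaths_comm_of_row_regular o hrow a₁ a₂
  have h₁ : (#(twoPaths o a₂ a) : ℝ) ≤ #(twoPaths o a₂ a₁) + #(twoPaths o a₁ a) := by
    exact_mod_cast card_twoPaths_le_add o a a₁ a₂
  have h₂ : (#(twoPaths o a₁ a) : ℝ) ≤ #(twoPaths o a₁ a₂) + #(twoPaths o a₂ a) := by
    exact_mod_cast card_twoPaths_le_add o a a₂ a₁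
  rw [← hsymm] at h₁
  rw [← hsymm, ← sq]
  exact sq_le_sq' (by linarith) (by linarith)

theorem spansC4_swap_left {a₁ a₂ : Fin m} {b₁ b₂ : Fin n} :
    SpansC4 o a₂ a₁ b₁ b₂ ↔ SpansC4 o a₁ a₂ b₁ b₂ := by
  unfold SpansC4; tauto

theorem spansC4_swap_right {a₁ a₂ : Fin m} {b₁ b₂ : Fin n} :
    SpansC4 o a₁ a₂ b₂ b₁ ↔ SpansC4 o a₁ a₂ b₁ b₂ := by
  unfold SpansC4; tauto

theorem spansC4_min_max {a₁ a₂ : Fin m} {b₁ b₂ : Fin n} :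
    SpansC4 o (min a₁ a₂) (max a₁ a₂) (min b₁ b₂) (max b₁ b₂) ↔ SpansC4 o a₁ a₂ b₁ b₂ := by
  rcases le_total a₁ a₂ with ha | ha <;> rcases le_total b₁ b₂ with hb | hb <;>
    simp only [min_eq_left, min_eq_right, max_eq_left, max_eq_right, ha, hb,
      spansC4_swap_left, spansC4_swap_right]

theorem sum_card_twoPaths_mul_le_numC4 {A B : Finset (Fin m)} (hAB : Disjoint A B) :
    ∑ i ∈ A, ∑ j ∈ B, #(twoPaths o i j) * #(twoPaths o j i) ≤ numC4 o := by
  have hcard : ∑ i ∈ A, ∑ j ∈ B, #(twoPaths o i j) * #(twoPaths o j i) =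
      #((A ×ˢ B).sigma fun p => twoPaths o p.1 p.2 ×ˢ twoPaths o p.2 p.1) := by
    simp only [card_sigma, card_product, sum_product]
  rw [hcard, numC4]
  refine card_le_card_of_injOn
    (fun x => (min x.1.1 x.1.2, max x.1.1 x.1.2, min x.2.1 x.2.2, max x.2.1 x.2.2)) ?_ ?_
  · rintro ⟨⟨i, j⟩, u, v⟩ hx
    simp only [coe_sigma, Set.mem_sigma_iff, coe_product, Set.mem_prod, mem_coe, twoPaths,
      mem_filter, mem_univ, true_and] at hx
    obtain ⟨⟨hi, hj⟩, ⟨hiu, hju⟩, hjv, hiv⟩ := hx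
    simp only [coe_filter, mem_univ, true_and, Set.mem_ofPred_eq, min_lt_max, spansC4_min_max]
    refine ⟨fun h => disjoint_left.1 hAB hi (h ▸ hj), fun h => ?_, Or.inl ⟨hiu, hju, hjv, hiv⟩⟩
    simp [h, hiv] at hiu
  · rintro ⟨⟨i, j⟩, u, v⟩ hx ⟨⟨i', j'⟩, u', v'⟩ hx' heq
    simp only [coe_sigma, Set.mem_sigma_iff, coe_product, Set.mem_prod, mem_coe, twoPaths,
      mem_filter, mem_univ, true_and] at hx hx'
    simp only [Prod.mk.injEq] at heq
    obtain ⟨hmin, hmax, hmin', hmax'⟩ := heq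
    obtain ⟨rfl, rfl⟩ | ⟨rfl, rfl⟩ := eq_and_eq_or_eq_and_eq_of_min_eq_of_max_eq hmin hmax
    · obtain ⟨rfl, rfl⟩ | ⟨rfl, rfl⟩ := eq_and_eq_or_eq_and_eq_of_min_eq_of_max_eq hmin' hmax'
      · rfl
      · simp [hx.2.1.1] at hx'
    · exact absurd hx'.1.2 (disjoint_left.1 hAB hx.1.1)

theorem dArc_eq_sum_card_twoPaths
    (hrow : ∀ a, 2 * #(univ.filter fun b => o a b = true) = n) (a : Fin m) (b : Fin n) :
    dArc o a b = ∑ i ∈ univ.filter (fun i => o i b = !o a b), #(twoPaths o i a) := by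
  cases hab : o a b <;>
    simp only [dArc, hab, Bool.false_eq_true, if_true, if_false, Bool.not_true, Bool.not_false,
      sum_filter, card_filter, Fintype.sum_prod_type] <;>
    refine sum_congr rfl fun i _ => ?_
  · rw [← card_twoPaths_comm_of_row_regular o hrow, twoPaths, card_filter]
    by_cases h : o i b = true <;> simp [h]
  · rw [twoPaths, card_filter]
    by_cases h : o i b = false <;> simp [h, and_comm]

theorem four_mul_sum_card_twoPaths (ho : IsEulerianBip o) (a : Fin m) :
    4 * ∑ i, #(twoPaths o i a) = m * n := by
  have hswap : ∑ i, #(twoPaths o i a) =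
      ∑ b ∈ univ.filter (fun b => o a b = false), #(univ.filter fun i => o i b = true) := by
    simp only [twoPaths, card_filter, sum_filter]
    rw [sum_comm]
    refine sum_congr rfl fun b _ => ?_
    by_cases h : o a b = false <;> simp [h]
  have hcol : 2 * ∑ b ∈ univ.filter (fun b => o a b = false), #(univ.filter fun i => o i b = true)
      = #(univ.filter fun b => o a b = false) * m := by
    rw [mul_sum, sum_congr rfl fun b _ => ho.2 b, sum_const, smul_eq_mul]
  have hrow := two_mul_card_filter_eq_of_two_mul_card_filter_true _ (ho.1 a) false
  rw [hswap]
  linear_combination (2 : ℕ) * hcol + m * hrow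

theorem sq_eight_mul_dArc_sub_le (ho : IsEulerianBip o) (a : Fin m) (b : Fin n) :
    ((8 * dArc o a b : ℝ) - m * n) ^ 2 ≤ 16 * numC4 o := by
  set X : Fin m → ℝ := fun i => #(twoPaths o i a)
  set A := univ.filter fun i => o i b = !o a b
  set B := univ.filter fun i => o i b = o a b
  have hd : (dArc o a b : ℝ) = ∑ i ∈ A, X i := by
    simp only [X, A, dArc_eq_sum_card_twoPaths o ho.1, Nat.cast_sum]
  have htotal : ∑ i ∈ A, X i + ∑ i ∈ B, X i = m * n / 4 := by
    have h := four_mul_sum_card_twoPaths o ho a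
    rw [← sum_filter_add_sum_filter_not univ (fun i => o i b = !o a b)] at h
    have hcompl : (univ.filter fun i => ¬o i b = !o a b) = B :=
      filter_congr fun i _ => by cases o i b <;> cases o a b <;> simp
    rw [hcompl] at h
    simp only [X, A]
    rw [eq_div_iff (by norm_num : (4 : ℝ) ≠ 0)]
    norm_cast
    omega
  have hcard : #A = #B := by
    have := two_mul_card_filter_eq_of_two_mul_card_filter_true _ (ho.2 b) (!o a b)
    have := two_mul_card_filter_eq_of_two_mul_card_filter_true _ (ho.2 b) (o a b)
    simp only [A, B]
    omega
  have hdisj : Disjoint A B := disjoint_filter.2 fun i _ hA hB => by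
    rw [hB] at hA; cases o a b <;> simp at hA
  calc ((8 * dArc o a b : ℝ) - m * n) ^ 2 = 16 * (∑ i ∈ A, X i - ∑ j ∈ B, X j) ^ 2 := by
        rw [hd]; linear_combination (4 * (12 * ∑ i ∈ A, X i - 4 * ∑ i ∈ B, X i - m * n)) * htotal
    _ ≤ 16 * ∑ i ∈ A, ∑ j ∈ B, (X i - X j) ^ 2 := by gcongr; exact sq_sum_sub_sum_le X hcard
    _ ≤ 16 * ∑ i ∈ A, ∑ j ∈ B, (#(twoPaths o i j) * #(twoPaths o j i) : ℝ) := by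
        gcongr with i _ j _; exact sq_sub_card_twoPaths_le o ho.1 a i j
    _ ≤ 16 * numC4 o := by
        gcongr; exact_mod_cast sum_card_twoPaths_mul_le_numC4 o hdisj

theorem sq_mul_one_quarter_sub_two_mul_alphaArc (a : Fin m) (b : Fin n) :
    ((m : ℝ) * n * (1 / 4 - 2 * alphaArc o a b)) ^ 2 =
      ((8 * dArc o a b : ℝ) - m * n) ^ 2 / 16 := by
  have hm : (m : ℝ) ≠ 0 := by have := a.pos; positivity
  have hn : (n : ℝ) ≠ 0 := by have := b.pos; positivity
  rcases min_choice ((dArc o a b : ℝ) / (m * n)) (1 / 4 - (dArc o a b : ℝ) / (m * n))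
    with h | h <;> rw [alphaArc, h] <;> field_simp <;> ring

end

theorem count_C4_alpha_eulerian_bipartite_general (m n : ℕ)
    (o : Fin m → Fin n → Bool) (ho : IsEulerianBip o) (αG : ℝ)
    (hαG : IsLeast {r : ℝ | ∃ (a : Fin m) (b : Fin n), r = alphaArc o a b} αG) :
    (m : ℝ) ^ 2 * (n : ℝ) ^ 2 * (1 / 16 - αG + 4 * αG ^ 2) ≤ (numC4 o : ℝ) := by
  obtain ⟨⟨a, b, rfl⟩, -⟩ := hαG
  have hα := sq_mul_one_quarter_sub_two_mul_alphaArc o a b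
  have hd := sq_eight_mul_dArc_sub_le o ho a b
  linear_combination hα + hd / 16

/-- Let `G` be an Eulerian orientation of `K_{m,n}` (`m`, `n` even) and let
`α(G) = min_e α(e)` over all arcs `e` of `G`.  Then `G` contains at least
`m²n²·(1/16 − α(G) + 4·α(G)²)` copies of the directed 4-cycle. -/
theorem count_C4_alpha_eulerian_bipartite (m n : ℕ) (hm : Even m) (hn : Even n)
    (o : Fin m → Fin n → Bool) (ho : IsEulerianBip o) (αG : ℝ)
    (hαG : IsLeast {r : ℝ | ∃ (a : Fin m) (b : Fin n), r = alphaArc o a b} αG) :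
    (m : ℝ) ^ 2 * (n : ℝ) ^ 2 * (1 / 16 - αG + 4 * αG ^ 2) ≤ (numC4 o : ℝ) :=
  count_C4_alpha_eulerian_bipartite_general m n o ho αG hαG
end

section
/- Let G be an Eulerian orientation of K_{m,n} (m, n even) with vertex classes A (|A| = m) and B (|B| = n). Every choice of two distinct vertices of A and two distinct vertices of B spans four arcs forming an orientation of the undirected 4-cycle. Let x be the number of such quadruples spanning a directed 4-cycle and let h₁ be the number of such quadruples spanning the orientation H₁ of the 4-cycle having two sources and two sinks. Then x − h₁ = (mn/4)·(m/2 + n/2 − 1). -/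
open Finset

/-- The four arcs spanned by `a₁, a₂, b₁, b₂` form the orientation `H₁` of the undirected
4-cycle having two sources and two sinks: either both left vertices are sources (all four
arcs point rightwards) or both right vertices are sources (all four arcs point leftwards). -/
def SpansH1 {m n : ℕ} (o : Fin m → Fin n → Bool) (a₁ a₂ : Fin m) (b₁ b₂ : Fin n) : Prop :=
  o a₁ b₁ = o a₂ b₁ ∧ o a₂ b₂ = o a₂ b₁ ∧ o a₁ b₂ = o a₂ b₁

instance {m n : ℕ} (o : Fin m → Fin n → Bool) (a₁ a₂ : Fin m) (b₁ b₂ : Fin n) :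
    Decidable (SpansH1 o a₁ a₂ b₁ b₂) := by
  unfold SpansH1; infer_instance

/-- The number of quadruples (two distinct left vertices and two distinct right vertices)
spanning a copy of `H₁`; each quadruple is recorded once via `a₁ < a₂`, `b₁ < b₂`. -/
def numH1 {m n : ℕ} (o : Fin m → Fin n → Bool) : ℕ :=
  ((univ : Finset (Fin m × Fin m × Fin n × Fin n)).filter fun q =>
    q.1 < q.2.1 ∧ q.2.2.1 < q.2.2.2 ∧ SpansH1 o q.1 q.2.1 q.2.2.1 q.2.2.2).card

def sgnBip {m n : ℕ} (o : Fin m → Fin n → Bool) (a : Fin m) (b : Fin n) : ℝ :=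
  if o a b then 1 else -1

def Esum {m n : ℕ} (o : Fin m → Fin n → Bool) (a₁ a₂ : Fin m) (b₁ b₂ : Fin n) : ℝ :=
  sgnBip o a₁ b₁ * sgnBip o a₁ b₂ + sgnBip o a₂ b₁ * sgnBip o a₂ b₂ +
  sgnBip o a₁ b₁ * sgnBip o a₂ b₁ + sgnBip o a₁ b₂ * sgnBip o a₂ b₂

lemma ite_sub_ite_key (x11 x21 x22 x12 : Bool) :
    ((if ((x11 = true ∧ x21 = false ∧ x22 = true ∧ x12 = false) ∨
        (x11 = false ∧ x21 = true ∧ x22 = false ∧ x12 = true)) then (1:ℝ) else 0) -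
     (if (x11 = x21 ∧ x22 = x21 ∧ x12 = x21) then (1:ℝ) else 0)) =
    -(1/4) * ((if x11 then (1:ℝ) else -1) * (if x12 then (1:ℝ) else -1)
      + (if x21 then (1:ℝ) else -1) * (if x22 then (1:ℝ) else -1)
      + (if x11 then (1:ℝ) else -1) * (if x21 then (1:ℝ) else -1)
      + (if x12 then (1:ℝ) else -1) * (if x22 then (1:ℝ) else -1)) := by
  cases x11 <;> cases x21 <;> cases x22 <;> cases x12 <;> norm_num

lemma sgnBip_sq {m n : ℕ} (o : Fin m → Fin n → Bool) (a : Fin m) (b : Fin n) :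
    sgnBip o a b * sgnBip o a b = 1 := by
  by_cases h : o a b <;> simp [sgnBip, h]

lemma ite_pull_sum2 {β : Type*} [Fintype β] (P : Prop) [Decidable P] (F : β → β → ℝ) :
    (∑ b₁ : β, ∑ b₂ : β, if P then F b₁ b₂ else 0)
      = if P then (∑ b₁ : β, ∑ b₂ : β, F b₁ b₂) else 0 := by
  split <;> simp

lemma sym2_sum {α : Type*} [Fintype α] [LinearOrder α] [DecidableEq α]
    [DecidableRel ((· < ·) : α → α → Prop)] (g : α → α → ℝ)
    (h : ∀ x y, g y x = g x y) :
    (∑ x : α, ∑ y : α, if x ≠ y then g x y else 0)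
      = 2 * ∑ x : α, ∑ y : α, if x < y then g x y else 0 := by
  have key : ∀ x y : α, (if x ≠ y then g x y else 0)
      = (if x < y then g x y else 0) + (if y < x then g x y else 0) := by
    intro x y
    rcases lt_trichotomy x y with h1 | h1 | h1
    · simp [h1, h1.ne, asymm h1]
    · simp [h1]
    · simp [h1, h1.ne', asymm h1]
  have swap : (∑ x : α, ∑ y : α, if y < x then g x y else 0)
      = ∑ x : α, ∑ y : α, if x < y then g x y else 0 := by
    rw [Finset.sum_comm]
    exact Finset.sum_congr rfl fun x _ => Finset.sum_congr rfl fun y _ => by rw [h]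
  simp_rw [key, Finset.sum_add_distrib]
  rw [swap]; ring

lemma sym4_sum {α β : Type*} [Fintype α] [LinearOrder α] [Fintype β] [LinearOrder β]
    [DecidableEq α] [DecidableRel ((· < ·) : α → α → Prop)]
    [DecidableEq β] [DecidableRel ((· < ·) : β → β → Prop)]
    (f : α → α → β → β → ℝ)
    (ha : ∀ a₁ a₂ b₁ b₂, f a₂ a₁ b₁ b₂ = f a₁ a₂ b₁ b₂)
    (hb : ∀ a₁ a₂ b₁ b₂, f a₁ a₂ b₂ b₁ = f a₁ a₂ b₁ b₂) :
    (∑ a₁ : α, ∑ a₂ : α, ∑ b₁ : β, ∑ b₂ : β, if a₁ ≠ a₂ ∧ b₁ ≠ b₂ then f a₁ a₂ b₁ b₂ else 0)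
    = 4 * ∑ a₁ : α, ∑ a₂ : α, ∑ b₁ : β, ∑ b₂ : β,
        if a₁ < a₂ ∧ b₁ < b₂ then f a₁ a₂ b₁ b₂ else 0 := by
  have inner1 : ∀ a₁ a₂ : α,
      (∑ b₁ : β, ∑ b₂ : β, if a₁ ≠ a₂ ∧ b₁ ≠ b₂ then f a₁ a₂ b₁ b₂ else 0)
      = if a₁ ≠ a₂ then
          2 * ∑ b₁ : β, ∑ b₂ : β, (if b₁ < b₂ then f a₁ a₂ b₁ b₂ else 0) else 0 := by
    intro a₁ a₂
    simp_rw [ite_and]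
    rw [ite_pull_sum2]
    congr 1
    exact sym2_sum (f a₁ a₂) (fun x y => (hb a₁ a₂ y x).symm ▸ hb a₁ a₂ x y)
  have inner2 : ∀ a₁ a₂ : α,
      (∑ b₁ : β, ∑ b₂ : β, if a₁ < a₂ ∧ b₁ < b₂ then f a₁ a₂ b₁ b₂ else 0)
      = if a₁ < a₂ then (∑ b₁ : β, ∑ b₂ : β, if b₁ < b₂ then f a₁ a₂ b₁ b₂ else 0) else 0 := by
    intro a₁ a₂
    simp_rw [ite_and]
    rw [ite_pull_sum2]
  simp_rw [inner1, inner2]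
  have := sym2_sum (fun a₁ a₂ => 2 * ∑ b₁ : β, ∑ b₂ : β, if b₁ < b₂ then f a₁ a₂ b₁ b₂ else 0)
    (fun x y => by
      have : ∀ b₁ b₂ : β, (if b₁ < b₂ then f y x b₁ b₂ else 0) = (if b₁ < b₂ then f x y b₁ b₂ else 0) := by
        intro b₁ b₂; by_cases hb' : b₁ < b₂ <;> simp [hb', ha]
      simp_rw [this])
  rw [this]
  have : ∀ a₁ a₂ : α, (if a₁ < a₂ then
      2 * ∑ b₁ : β, ∑ b₂ : β, (if b₁ < b₂ then f a₁ a₂ b₁ b₂ else 0) else 0)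
      = 2 * (if a₁ < a₂ then (∑ b₁ : β, ∑ b₂ : β, if b₁ < b₂ then f a₁ a₂ b₁ b₂ else 0) else 0) := by
    intro a₁ a₂; split <;> simp
  simp_rw [this, ← Finset.mul_sum]
  ring

lemma ie_ite {α β : Type*} [DecidableEq α] [DecidableEq β] (a₁ a₂ : α) (b₁ b₂ : β) (x : ℝ) :
    (if a₁ ≠ a₂ ∧ b₁ ≠ b₂ then x else 0)
    = x - (if a₁ = a₂ then x else 0) - (if b₁ = b₂ then x else 0)
      + (if a₁ = a₂ ∧ b₁ = b₂ then x else 0) := by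
  by_cases h1 : a₁ = a₂ <;> by_cases h2 : b₁ = b₂ <;> simp [h1, h2]

lemma ite_pull_const (P : Prop) [Decidable P] (x : ℝ) :
    (if P then -(1/4:ℝ) * x else 0) = -(1/4) * (if P then x else 0) := by
  split <;> simp

lemma rowsum_eq_zero {m n : ℕ} (o : Fin m → Fin n → Bool)
    (h1 : ∀ a : Fin m, 2 * (univ.filter fun b : Fin n => o a b = true).card = n)
    (a : Fin m) : ∑ b : Fin n, sgnBip o a b = 0 := by
  have hc := h1 a
  have hsplit := Finset.sum_filter_add_sum_filter_not (univ : Finset (Fin n))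
    (fun b => o a b = true) (fun b => sgnBip o a b)
  have e1 : ∑ b ∈ univ.filter (fun b => o a b = true), sgnBip o a b
      = (univ.filter (fun b : Fin n => o a b = true)).card := by
    rw [Finset.sum_congr rfl (fun b hb => ?_), Finset.sum_const, nsmul_eq_mul, mul_one]
    simp only [Finset.mem_filter] at hb
    simp [sgnBip, hb.2]
  have e2 : ∑ b ∈ univ.filter (fun b => ¬ o a b = true), sgnBip o a b
      = -((univ.filter (fun b : Fin n => ¬ o a b = true)).card : ℝ) := by
    rw [Finset.sum_congr rfl (fun b hb => ?_), Finset.sum_const, nsmul_eq_mul, mul_neg, mul_one]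
    simp only [Finset.mem_filter] at hb
    simp [sgnBip, hb.2]
  have hcards : (univ.filter (fun b : Fin n => o a b = true)).card
      + (univ.filter (fun b : Fin n => ¬ o a b = true)).card = n := by
    rw [Finset.card_filter_add_card_filter_not, Finset.card_univ, Fintype.card_fin]
  rw [e1, e2] at hsplit
  rw [← hsplit]
  have h3 : ((univ.filter (fun b : Fin n => ¬ o a b = true)).card : ℝ)
      = (n : ℝ) - (univ.filter (fun b : Fin n => o a b = true)).card := by
    have h4 : ((univ.filter (fun b : Fin n => o a b = true)).card : ℝ)
        + (univ.filter (fun b : Fin n => ¬ o a b = true)).card = n := by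
      exact_mod_cast congrArg (Nat.cast : ℕ → ℝ) hcards
    linarith
  have h5 : ((univ.filter (fun b : Fin n => o a b = true)).card : ℝ) = (n : ℝ) / 2 := by
    have h6 : ((2 * (univ.filter (fun b : Fin n => o a b = true)).card : ℕ) : ℝ) = (n : ℝ) := by
      rw [hc]
    push_cast at h6
    linarith
  rw [h3, h5]; ring

lemma colsum_eq_zero {m n : ℕ} (o : Fin m → Fin n → Bool)
    (h2 : ∀ b : Fin n, 2 * (univ.filter fun a : Fin m => o a b = true).card = m)
    (b : Fin n) : ∑ a : Fin m, sgnBip o a b = 0 := by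
  have hc := h2 b
  have hsplit := Finset.sum_filter_add_sum_filter_not (univ : Finset (Fin m))
    (fun a => o a b = true) (fun a => sgnBip o a b)
  have e1 : ∑ a ∈ univ.filter (fun a => o a b = true), sgnBip o a b
      = (univ.filter (fun a : Fin m => o a b = true)).card := by
    rw [Finset.sum_congr rfl (fun a ha => ?_), Finset.sum_const, nsmul_eq_mul, mul_one]
    simp only [Finset.mem_filter] at ha
    simp [sgnBip, ha.2]
  have e2 : ∑ a ∈ univ.filter (fun a => ¬ o a b = true), sgnBip o a b
      = -((univ.filter (fun a : Fin m => ¬ o a b = true)).card : ℝ) := by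
    rw [Finset.sum_congr rfl (fun a ha => ?_), Finset.sum_const, nsmul_eq_mul, mul_neg, mul_one]
    simp only [Finset.mem_filter] at ha
    simp [sgnBip, ha.2]
  have hcards : (univ.filter (fun a : Fin m => o a b = true)).card
      + (univ.filter (fun a : Fin m => ¬ o a b = true)).card = m := by
    rw [Finset.card_filter_add_card_filter_not, Finset.card_univ, Fintype.card_fin]
  rw [e1, e2] at hsplit
  rw [← hsplit]
  have h3 : ((univ.filter (fun a : Fin m => ¬ o a b = true)).card : ℝ)
      = (m : ℝ) - (univ.filter (fun a : Fin m => o a b = true)).card := by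
    have h4 : ((univ.filter (fun a : Fin m => o a b = true)).card : ℝ)
        + (univ.filter (fun a : Fin m => ¬ o a b = true)).card = m := by
      exact_mod_cast congrArg (Nat.cast : ℕ → ℝ) hcards
    linarith
  have h5 : ((univ.filter (fun a : Fin m => o a b = true)).card : ℝ) = (m : ℝ) / 2 := by
    have h6 : ((2 * (univ.filter (fun a : Fin m => o a b = true)).card : ℕ) : ℝ) = (m : ℝ) := by
      rw [hc]
    push_cast at h6
    linarith
  rw [h3, h5]; ring

lemma sumA {m n : ℕ} (o : Fin m → Fin n → Bool)
    (hrow : ∀ a : Fin m, ∑ b : Fin n, sgnBip o a b = 0)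
    (hcol : ∀ b : Fin n, ∑ a : Fin m, sgnBip o a b = 0) :
    (∑ a₁ : Fin m, ∑ a₂ : Fin m, ∑ b₁ : Fin n, ∑ b₂ : Fin n, Esum o a₁ a₂ b₁ b₂) = 0 := by
  simp only [Esum]
  simp_rw [Finset.sum_add_distrib]
  have t1 : (∑ a₁ : Fin m, ∑ a₂ : Fin m, ∑ b₁ : Fin n, ∑ b₂ : Fin n,
      sgnBip o a₁ b₁ * sgnBip o a₁ b₂) = 0 := by
    simp_rw [← Finset.mul_sum, hrow, mul_zero, Finset.sum_const_zero]
  have t2 : (∑ a₁ : Fin m, ∑ a₂ : Fin m, ∑ b₁ : Fin n, ∑ b₂ : Fin n,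
      sgnBip o a₂ b₁ * sgnBip o a₂ b₂) = 0 := by
    simp_rw [← Finset.mul_sum, hrow, mul_zero, Finset.sum_const_zero]
  have inner3 : ∀ (a₁ : Fin m) (b₁ : Fin n),
      (∑ a₂ : Fin m, sgnBip o a₁ b₁ * sgnBip o a₂ b₁) = 0 := by
    intro a₁ b₁; rw [← Finset.mul_sum, hcol, mul_zero]
  have t3 : (∑ a₁ : Fin m, ∑ a₂ : Fin m, ∑ b₁ : Fin n, ∑ b₂ : Fin n,
      sgnBip o a₁ b₁ * sgnBip o a₂ b₁) = 0 := by
    rw [Finset.sum_congr rfl (fun a₁ _ => Finset.sum_comm)]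
    rw [Finset.sum_congr rfl (fun a₁ _ => Finset.sum_congr rfl
      (fun b₁ _ => Finset.sum_comm))]
    simp_rw [inner3, Finset.sum_const_zero]
  have inner4 : ∀ (a₁ : Fin m) (b₂ : Fin n),
      (∑ a₂ : Fin m, sgnBip o a₁ b₂ * sgnBip o a₂ b₂) = 0 := by
    intro a₁ b₂; rw [← Finset.mul_sum, hcol, mul_zero]
  have t4 : (∑ a₁ : Fin m, ∑ a₂ : Fin m, ∑ b₁ : Fin n, ∑ b₂ : Fin n,
      sgnBip o a₁ b₂ * sgnBip o a₂ b₂) = 0 := by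
    rw [Finset.sum_congr rfl (fun a₁ _ => Finset.sum_comm)]
    rw [Finset.sum_congr rfl (fun a₁ _ => Finset.sum_congr rfl
      (fun b₁ _ => Finset.sum_comm))]
    simp_rw [inner4, Finset.sum_const_zero]
  rw [t1, t2, t3, t4]; ring

lemma sumB {m n : ℕ} (o : Fin m → Fin n → Bool)
    (hrow : ∀ a : Fin m, ∑ b : Fin n, sgnBip o a b = 0) :
    (∑ a₁ : Fin m, ∑ a₂ : Fin m, ∑ b₁ : Fin n, ∑ b₂ : Fin n,
      (if a₁ = a₂ then Esum o a₁ a₂ b₁ b₂ else 0)) = 2 * m * n * n := by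
  simp_rw [ite_pull_sum2, Finset.sum_ite_eq, Finset.mem_univ, if_true]
  have key : ∀ a : Fin m, (∑ b₁ : Fin n, ∑ b₂ : Fin n, Esum o a a b₁ b₂) = 2 * n * n := by
    intro a
    simp only [Esum, sgnBip_sq]
    simp_rw [Finset.sum_add_distrib, ← Finset.mul_sum, hrow, mul_zero,
      Finset.sum_const_zero, Finset.sum_const, Finset.card_univ, Fintype.card_fin,
      nsmul_eq_mul, mul_one]
    ring
  simp_rw [key, Finset.sum_const, Finset.card_univ, Fintype.card_fin, nsmul_eq_mul]
  ring

lemma sumC {m n : ℕ} (o : Fin m → Fin n → Bool)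
    (hcol : ∀ b : Fin n, ∑ a : Fin m, sgnBip o a b = 0) :
    (∑ a₁ : Fin m, ∑ a₂ : Fin m, ∑ b₁ : Fin n, ∑ b₂ : Fin n,
      (if b₁ = b₂ then Esum o a₁ a₂ b₁ b₂ else 0)) = 2 * m * m * n := by
  simp_rw [Finset.sum_ite_eq, Finset.mem_univ, if_true]
  rw [Finset.sum_congr rfl (fun a₁ _ => Finset.sum_comm)]
  have key : ∀ (a₁ : Fin m) (b : Fin n), (∑ a₂ : Fin m, Esum o a₁ a₂ b b) = 2 * m := by
    intro a₁ b
    simp only [Esum, sgnBip_sq]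
    simp_rw [Finset.sum_add_distrib, ← Finset.mul_sum, hcol, mul_zero, Finset.sum_const,
      Finset.card_univ, Fintype.card_fin, nsmul_eq_mul, mul_one]
    ring
  simp_rw [key, Finset.sum_const, Finset.card_univ, Fintype.card_fin, nsmul_eq_mul]
  ring

lemma sumD {m n : ℕ} (o : Fin m → Fin n → Bool) :
    (∑ a₁ : Fin m, ∑ a₂ : Fin m, ∑ b₁ : Fin n, ∑ b₂ : Fin n,
      (if a₁ = a₂ ∧ b₁ = b₂ then Esum o a₁ a₂ b₁ b₂ else 0)) = 4 * m * n := by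
  simp_rw [ite_and, ite_pull_sum2, Finset.sum_ite_eq, Finset.mem_univ, if_true]
  have key : ∀ (a : Fin m) (b : Fin n), Esum o a a b b = 4 := by
    intro a b
    have := sgnBip_sq o a b
    simp only [Esum]
    nlinarith [this]
  simp_rw [key, Finset.sum_const, Finset.card_univ, Fintype.card_fin, nsmul_eq_mul]
  ring

set_option maxHeartbeats 800000 in
lemma count_diff_eq {m n : ℕ} (o : Fin m → Fin n → Bool) :
    (numC4 o : ℝ) - (numH1 o : ℝ)
      = ∑ a₁ : Fin m, ∑ a₂ : Fin m, ∑ b₁ : Fin n, ∑ b₂ : Fin n,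
          (if a₁ < a₂ ∧ b₁ < b₂ then -(1/4) * Esum o a₁ a₂ b₁ b₂ else 0) := by
  have hC4 : (numC4 o : ℝ) = ∑ a₁ : Fin m, ∑ a₂ : Fin m, ∑ b₁ : Fin n, ∑ b₂ : Fin n,
      (if a₁ < a₂ ∧ b₁ < b₂ ∧ SpansC4 o a₁ a₂ b₁ b₂ then (1:ℝ) else 0) := by
    rw [numC4, Finset.card_filter]
    push_cast
    rw [Fintype.sum_prod_type]
    simp_rw [Fintype.sum_prod_type]
  have hH1 : (numH1 o : ℝ) = ∑ a₁ : Fin m, ∑ a₂ : Fin m, ∑ b₁ : Fin n, ∑ b₂ : Fin n,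
      (if a₁ < a₂ ∧ b₁ < b₂ ∧ SpansH1 o a₁ a₂ b₁ b₂ then (1:ℝ) else 0) := by
    rw [numH1, Finset.card_filter]
    push_cast
    rw [Fintype.sum_prod_type]
    simp_rw [Fintype.sum_prod_type]
  rw [hC4, hH1]
  simp_rw [← Finset.sum_sub_distrib]
  refine Finset.sum_congr rfl fun a₁ _ => Finset.sum_congr rfl fun a₂ _ =>
    Finset.sum_congr rfl fun b₁ _ => Finset.sum_congr rfl fun b₂ _ => ?_
  by_cases hp : a₁ < a₂ ∧ b₁ < b₂
  · simp only [hp, if_true, hp.1, hp.2, true_and]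
    have := ite_sub_ite_key (o a₁ b₁) (o a₂ b₁) (o a₂ b₂) (o a₁ b₂)
    simpa [SpansC4, SpansH1, Esum, sgnBip] using this
  · have hc1 : ¬(a₁ < a₂ ∧ b₁ < b₂ ∧ SpansC4 o a₁ a₂ b₁ b₂) := fun h => hp ⟨h.1, h.2.1⟩
    have hc2 : ¬(a₁ < a₂ ∧ b₁ < b₂ ∧ SpansH1 o a₁ a₂ b₁ b₂) := fun h => hp ⟨h.1, h.2.1⟩
    simp [hc1, hc2, hp]


lemma sumV {m n : ℕ} (o : Fin m → Fin n → Bool)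
    (hrow : ∀ a : Fin m, ∑ b : Fin n, sgnBip o a b = 0)
    (hcol : ∀ b : Fin n, ∑ a : Fin m, sgnBip o a b = 0) :
    (∑ a₁ : Fin m, ∑ a₂ : Fin m, ∑ b₁ : Fin n, ∑ b₂ : Fin n,
      (if a₁ ≠ a₂ ∧ b₁ ≠ b₂ then Esum o a₁ a₂ b₁ b₂ else 0))
    = 0 - 2 * m * n * n - 2 * m * m * n + 4 * m * n := by
  simp_rw [ie_ite, Finset.sum_add_distrib, Finset.sum_sub_distrib]
  rw [sumA o hrow hcol, sumB o hrow, sumC o hcol, sumD o]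


/-- For an Eulerian orientation of `K_{m,n}` (`m`, `n` even), with `x` the number of
quadruples spanning a directed 4-cycle and `h₁` the number of quadruples spanning `H₁`,
one has `x − h₁ = (mn/4)·(m/2 + n/2 − 1)`. -/
theorem numC4_sub_numH1_eulerian_bipartite (m n : ℕ) (hm : Even m) (hn : Even n)
    (o : Fin m → Fin n → Bool) (ho : IsEulerianBip o) :
    (numC4 o : ℝ) - (numH1 o : ℝ) =
      (m : ℝ) * n / 4 * ((m : ℝ) / 2 + (n : ℝ) / 2 - 1) := by
  have hrow := rowsum_eq_zero o ho.1
  have hcol := colsum_eq_zero o ho.2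
  rw [count_diff_eq o]
  simp_rw [ite_pull_const, ← Finset.mul_sum]
  have hsym := sym4_sum (Esum o)
    (fun a₁ a₂ b₁ b₂ => by simp only [Esum]; ring)
    (fun a₁ a₂ b₁ b₂ => by simp only [Esum]; ring)
  have hV := sumV o hrow hcol
  rw [hV] at hsym
  have hS : (∑ a₁ : Fin m, ∑ a₂ : Fin m, ∑ b₁ : Fin n, ∑ b₂ : Fin n,
      (if a₁ < a₂ ∧ b₁ < b₂ then Esum o a₁ a₂ b₁ b₂ else 0))
      = (0 - 2 * m * n * n - 2 * m * m * n + 4 * m * n) / 4 := by linarith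
  rw [hS]
  ring
end

section
/- Let G be an Eulerian orientation of K_{m,n} (m, n even) with vertex classes A (|A| = m) and B (|B| = n), and let u, v be two distinct vertices of A. Let k denote the number of common out-neighbors of u and v. Then: (i) k also equals the number of common in-neighbors of u and v; (ii) the number of pairs of distinct vertices {b, b'} ⊆ B such that u, v, b, b' span a directed 4-cycle equals (n/2 − k)²; and (iii) the number of pairs {b, b'} ⊆ B such that u, v, b, b' span the orientation H₁ of the 4-cycle having two sources and two sinks equals 2·C(k,2) = k(k−1). -/
open Finset

/-! Classify the right vertices `b` by the pair `(o u b, o v b)` into classes `TT, TF, FT, FF`.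
Balance at `u` and at `v` gives `|TT| + |TF| = |TT| + |FT| = n/2`, and `|TF| + |FF| = n/2` since
`v` has `n/2` in-neighbours; hence `|FF| = |TT| = k` and `|TF| = |FT| = n/2 - k`. A pair
`{b, b'}` spans `C4` iff one of its vertices lies in `TF` and the other in `FT`, and spans `H₁`
iff both lie in `TT` or both in `FF`; counting ordered pairs and halving gives both formulas. -/

section Halving

variable {β : Type*} [Fintype β] [LinearOrder β]

theorem two_mul_card_filter_lt_of_symm (r : β → β → Prop) [DecidableRel r]
    (hr : ∀ a b, r a b → r b a) :
    2 * #{p : β × β | p.1 < p.2 ∧ r p.1 p.2} = #{p : β × β | p.1 ≠ p.2 ∧ r p.1 p.2} := by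
  have hswap :
      #{p : β × β | p.2 < p.1 ∧ r p.1 p.2} = #{p : β × β | p.1 < p.2 ∧ r p.1 p.2} :=
    card_equiv (Equiv.prodComm β β) fun _ => by simpa using fun _ => ⟨hr _ _, hr _ _⟩
  have hsplit : (univ.filter fun p : β × β => p.1 ≠ p.2 ∧ r p.1 p.2) =
      (univ.filter fun p : β × β => p.1 < p.2 ∧ r p.1 p.2) ∪
        univ.filter fun p : β × β => p.2 < p.1 ∧ r p.1 p.2 := by
    rw [← filter_or]
    exact filter_congr fun p _ => by rw [ne_iff_lt_or_gt, or_and_right]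
  have hdisj : Disjoint (univ.filter fun p : β × β => p.1 < p.2 ∧ r p.1 p.2)
      (univ.filter fun p : β × β => p.2 < p.1 ∧ r p.1 p.2) :=
    disjoint_filter.2 fun _ _ h h' => h.1.asymm h'.1
  rw [hsplit, card_union_of_disjoint hdisj, hswap, two_mul]

end Halving

section Columns

variable {β : Type*} [Fintype β] (x y : β → Bool)

theorem card_filter_and_true_add_card_filter_and_false (s : Bool) :
    #{b | x b = s ∧ y b = true} + #{b | x b = s ∧ y b = false} = #{b | x b = s} := by
  simp only [← filter_filter, ← Bool.not_eq_true]
  exact card_filter_add_card_filter_not _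

theorem card_filter_true_and_add_card_filter_false_and (t : Bool) :
    #{b | x b = true ∧ y b = t} + #{b | x b = false ∧ y b = t} = #{b | y b = t} := by
  simpa only [and_comm] using card_filter_and_true_add_card_filter_and_false y x t

theorem card_filter_true_true_eq_card_filter_false_false
    (hx : 2 * #{b | x b = true} = Fintype.card β) (hy : 2 * #{b | y b = true} = Fintype.card β) :
    #{b | x b = true ∧ y b = true} = #{b | x b = false ∧ y b = false} := by
  have hxt := card_filter_and_true_add_card_filter_and_false x y true
  have hyf := card_filter_true_and_add_card_filter_false_and x y false
  have hy_total : #{b | y b = true} + #{b | y b = false} = Fintype.card β := by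
    simpa only [Bool.not_eq_true] using
      (card_filter_add_card_filter_not (s := univ) (y · = true)).trans card_univ
  omega

end Columns

section Pairs

variable {m n : ℕ} (o : Fin m → Fin n → Bool) (u v : Fin m)

theorem spansC4_symm (b₁ b₂ : Fin n) : SpansC4 o u v b₁ b₂ → SpansC4 o u v b₂ b₁ := by
  unfold SpansC4
  tauto

theorem spansH1_symm (b₁ b₂ : Fin n) : SpansH1 o u v b₁ b₂ → SpansH1 o u v b₂ b₁ := by
  unfold SpansH1
  grind

theorem filter_ne_spansC4_eq :
    (univ.filter fun p : Fin n × Fin n => p.1 ≠ p.2 ∧ SpansC4 o u v p.1 p.2) =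
      ({b | o u b = true ∧ o v b = false} : Finset (Fin n)) ×ˢ
          ({b | o u b = false ∧ o v b = true} : Finset (Fin n)) ∪
        ({b | o u b = false ∧ o v b = true} : Finset (Fin n)) ×ˢ
          ({b | o u b = true ∧ o v b = false} : Finset (Fin n)) := by
  ext ⟨b₁, b₂⟩
  simp only [SpansC4]
  grind

theorem filter_ne_spansH1_eq :
    (univ.filter fun p : Fin n × Fin n => p.1 ≠ p.2 ∧ SpansH1 o u v p.1 p.2) =
      ({b | o u b = true ∧ o v b = true} : Finset (Fin n)).offDiag ∪
        ({b | o u b = false ∧ o v b = false} : Finset (Fin n)).offDiag := by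
  ext ⟨b₁, b₂⟩
  simp only [SpansH1]
  grind

theorem card_filter_lt_spansC4 :
    #{p : Fin n × Fin n | p.1 < p.2 ∧ SpansC4 o u v p.1 p.2} =
      #{b | o u b = true ∧ o v b = false} * #{b | o u b = false ∧ o v b = true} := by
  have hdisj : Disjoint ({b | o u b = true ∧ o v b = false} : Finset (Fin n))
      ({b | o u b = false ∧ o v b = true} : Finset (Fin n)) :=
    disjoint_filter.2 fun b _ h h' => by simp [h.1] at h'
  have h := two_mul_card_filter_lt_of_symm _ (spansC4_symm o u v)
  rw [filter_ne_spansC4_eq, card_union_of_disjoint (disjoint_product.2 (.inl hdisj)),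
    card_product, card_product, Nat.mul_comm #{b | o u b = false ∧ o v b = true}] at h
  omega

theorem two_mul_card_filter_lt_spansH1 :
    2 * #{p : Fin n × Fin n | p.1 < p.2 ∧ SpansH1 o u v p.1 p.2} =
      #{b | o u b = true ∧ o v b = true} * (#{b | o u b = true ∧ o v b = true} - 1) +
        #{b | o u b = false ∧ o v b = false} * (#{b | o u b = false ∧ o v b = false} - 1) := by
  have hdisj : Disjoint ({b | o u b = true ∧ o v b = true} : Finset (Fin n))
      ({b | o u b = false ∧ o v b = false} : Finset (Fin n)) :=
    disjoint_filter.2 fun b _ h h' => by simp [h.1] at h'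
  have hdisj_offDiag : Disjoint ({b | o u b = true ∧ o v b = true} : Finset (Fin n)).offDiag
      ({b | o u b = false ∧ o v b = false} : Finset (Fin n)).offDiag :=
    disjoint_left.2 fun _ hp hp' =>
      disjoint_left.1 hdisj (mem_offDiag.1 hp).1 (mem_offDiag.1 hp').1
  rw [two_mul_card_filter_lt_of_symm _ (spansH1_symm o u v), filter_ne_spansH1_eq,
    card_union_of_disjoint hdisj_offDiag, offDiag_card, offDiag_card, Nat.mul_sub_one,
    Nat.mul_sub_one]

end Pairs

theorem common_neighbors_C4_H1_count_general (m n : ℕ)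
    (o : Fin m → Fin n → Bool) (ho : IsEulerianBip o) (u v : Fin m)
    (k : ℕ) (hk : k = (univ.filter fun b : Fin n => o u b = true ∧ o v b = true).card) :
    k = (univ.filter fun b : Fin n => o u b = false ∧ o v b = false).card ∧
    ((((univ : Finset (Fin n × Fin n)).filter fun p =>
        p.1 < p.2 ∧ SpansC4 o u v p.1 p.2).card : ℝ) = ((n : ℝ) / 2 - (k : ℝ)) ^ 2) ∧
    (((univ : Finset (Fin n × Fin n)).filter fun p =>
        p.1 < p.2 ∧ SpansH1 o u v p.1 p.2).card = k * (k - 1)) := by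
  have hcard := Fintype.card_fin n
  have hu : 2 * #{b | o u b = true} = Fintype.card (Fin n) := (ho.1 u).trans hcard.symm
  have hv : 2 * #{b | o v b = true} = Fintype.card (Fin n) := (ho.1 v).trans hcard.symm
  have hkFF : k = #{b | o u b = false ∧ o v b = false} :=
    hk.trans (card_filter_true_true_eq_card_filter_false_false (o u) (o v) hu hv)
  refine ⟨hkFF, ?_, ?_⟩
  · have hTF := card_filter_and_true_add_card_filter_and_false (o u) (o v) true
    have hFT := card_filter_true_and_add_card_filter_false_and (o u) (o v) true
    have hFT_eq_TF :
        #{b | o u b = false ∧ o v b = true} = #{b | o u b = true ∧ o v b = false} := by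
      omega
    have hn : (n : ℝ) = 2 * (k + #{b | o u b = true ∧ o v b = false}) := by
      exact_mod_cast (by omega : n = 2 * (k + #{b | o u b = true ∧ o v b = false}))
    rw [card_filter_lt_spansC4, hFT_eq_TF, hn]
    push_cast
    ring
  · have hH1 := two_mul_card_filter_lt_spansH1 o u v
    rw [← hk, ← hkFF] at hH1
    omega

/-- Let `G` be an Eulerian orientation of `K_{m,n}` (`m`, `n` even) and let `u ≠ v` be two
left vertices, with `k` their number of common out-neighbors.  Then (i) `k` equals their
number of common in-neighbors, (ii) the number of pairs `{b, b'}` of right vertices such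
that `u, v, b, b'` span a directed 4-cycle is `(n/2 − k)²`, and (iii) the number of pairs
`{b, b'}` such that `u, v, b, b'` span `H₁` is `2·C(k,2) = k(k−1)`. -/
theorem common_neighbors_C4_H1_count (m n : ℕ) (hm : Even m) (hn : Even n)
    (o : Fin m → Fin n → Bool) (ho : IsEulerianBip o) (u v : Fin m) (huv : u ≠ v)
    (k : ℕ) (hk : k = (univ.filter fun b : Fin n => o u b = true ∧ o v b = true).card) :
    k = (univ.filter fun b : Fin n => o u b = false ∧ o v b = false).card ∧
    ((((univ : Finset (Fin n × Fin n)).filter fun p =>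
        p.1 < p.2 ∧ SpansC4 o u v p.1 p.2).card : ℝ) = ((n : ℝ) / 2 - (k : ℝ)) ^ 2) ∧
    (((univ : Finset (Fin n × Fin n)).filter fun p =>
        p.1 < p.2 ∧ SpansH1 o u v p.1 p.2).card = k * (k - 1)) :=
  common_neighbors_C4_H1_count_general m n o ho u v k hk
end

section
/- Let G be an Eulerian orientation of K_{m,n} (m, n even) with vertex classes A (|A| = m) and B (|B| = n). Let x be the number of quadruples (two distinct vertices of A together with two distinct vertices of B) spanning a directed 4-cycle and h₁ the number of quadruples spanning the orientation H₁ of the 4-cycle with two sources and two sinks. Then 2x + 2h₁ ≥ C(m,2)·(n² − 2n − 1)/8 + C(n,2)·(m² − 2m − 1)/8. -/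
open Finset

/-!
Fix two left vertices `a₁, a₂` and record, for each right vertex `b`, the pattern
`(o a₁ b, o a₂ b)`. The quadruple `a₁, a₂, b₁, b₂` spans a `C4` or an `H₁` exactly when the
pattern at `b₂` is the pattern at `b₁` with its entries exchanged. If `p` right vertices have
pattern `(true, true)` and `s` have pattern `(true, false)`, Eulerianity forces `p` of pattern
`(false, false)`, `s` of pattern `(false, true)` and `p + s = n / 2`, so the pair `a₁, a₂` lies
in `s² + p (p - 1) ≥ (n² - 2n - 1) / 8` such quadruples. Summing over the pairs of left vertices
counts `x + h₁`, and so does summing over the pairs of right vertices.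
-/

theorem two_mul_card_filter_lt_add_card_filter_diag {α : Type*} [Fintype α] [LinearOrder α]
    (R : α → α → Prop) [DecidableRel R] (hR : ∀ a b, R a b → R b a) :
    2 * #{p : α × α | p.1 < p.2 ∧ R p.1 p.2} + #{a | R a a} = #{p : α × α | R p.1 p.2} := by
  have hswap : #{p : α × α | p.2 < p.1 ∧ R p.1 p.2} = #{p : α × α | p.1 < p.2 ∧ R p.1 p.2} :=
    card_equiv (Equiv.prodComm α α) fun p => by simpa using fun _ => ⟨hR _ _, hR _ _⟩
  have hdiag : #{p : α × α | p.1 = p.2 ∧ R p.1 p.2} = #{a | R a a} :=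
    card_nbij' Prod.fst (fun a => (a, a)) (by intro p; aesop) (by intro a; simp)
      (by intro p; aesop) (by intro a; simp)
  have hsplit (p : α × α) : (if R p.1 p.2 then 1 else 0) =
      (if p.1 < p.2 ∧ R p.1 p.2 then 1 else 0) + (if p.2 < p.1 ∧ R p.1 p.2 then 1 else 0) +
        (if p.1 = p.2 ∧ R p.1 p.2 then 1 else 0) := by
    obtain ⟨a, b⟩ := p
    rcases lt_trichotomy a b with h | rfl | h
    · simp [h, h.not_gt, h.ne]
    · simp
    · simp [h, h.not_gt, h.ne']
  rw [card_filter (fun p : α × α => R p.1 p.2), sum_congr rfl fun p _ => hsplit p]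
  simp only [sum_add_distrib, ← card_filter, hswap, hdiag]
  ring

theorem card_filter_lt_eq_choose_two (α : Type*) [Fintype α] [LinearOrder α] :
    #{p : α × α | p.1 < p.2} = (Fintype.card α).choose 2 := by
  have h := two_mul_card_filter_lt_add_card_filter_diag (fun _ _ : α => True) fun _ _ _ => trivial
  simp only [and_true, filter_true, card_univ, Fintype.card_prod] at h
  rw [Nat.choose_two_right, Nat.mul_sub_one]
  omega

theorem sum_comp_eq_sum_card_fiber_mul {ι κ : Type*} [Fintype ι] [Fintype κ] [DecidableEq κ]
    (g : ι → κ) (f : κ → ℕ) : ∑ i, f (g i) = ∑ j, #{i | g i = j} * f j := by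
  simp only [← sum_fiberwise' univ g f, sum_const, smul_eq_mul]

theorem card_filter_swap_eq_sum {β : Type*} [Fintype β] (v w : β → Bool) :
    #{p : β × β | v p.1 = w p.2 ∧ v p.2 = w p.1} =
      ∑ c : Bool × Bool, #{b | (v b, w b) = c} * #{b | (v b, w b) = c.swap} := by
  rw [card_filter, Fintype.sum_prod_type]
  simp only [← card_filter]
  rw [← sum_comp_eq_sum_card_fiber_mul (fun b => (v b, w b)) fun c => #{b | (v b, w b) = c.swap}]
  refine sum_congr rfl fun b _ => congrArg card (filter_congr fun b' _ => ?_)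
  simp only [Prod.swap_prod_mk, Prod.mk.injEq]
  exact ⟨fun h => ⟨h.2, h.1.symm⟩, fun h => ⟨h.2.symm, h.1⟩⟩

theorem spansC4_or_spansH1_iff {m n : ℕ} (o : Fin m → Fin n → Bool) (a₁ a₂ : Fin m)
    (b₁ b₂ : Fin n) :
    SpansC4 o a₁ a₂ b₁ b₂ ∨ SpansH1 o a₁ a₂ b₁ b₂ ↔ o a₁ b₁ = o a₂ b₂ ∧ o a₁ b₂ = o a₂ b₁ := by
  unfold SpansC4 SpansH1
  cases o a₁ b₁ <;> cases o a₂ b₁ <;> cases o a₂ b₂ <;> cases o a₁ b₂ <;> decide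

theorem not_spansC4_and_spansH1 {m n : ℕ} (o : Fin m → Fin n → Bool) (a₁ a₂ : Fin m)
    (b₁ b₂ : Fin n) : ¬(SpansC4 o a₁ a₂ b₁ b₂ ∧ SpansH1 o a₁ a₂ b₁ b₂) := by
  unfold SpansC4 SpansH1
  cases o a₁ b₁ <;> cases o a₂ b₁ <;> cases o a₂ b₂ <;> cases o a₁ b₂ <;> decide

section Orientation

variable {α β : Type*} [Fintype α] [LinearOrder α] [Fintype β] [LinearOrder β]

def numSwapPairs (v w : β → Bool) : ℕ :=
  #{p : β × β | p.1 < p.2 ∧ v p.1 = w p.2 ∧ v p.2 = w p.1}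

theorem le_numSwapPairs (v w : β → Bool) (hv : 2 * #{b | v b = true} = Fintype.card β)
    (hw : 2 * #{b | w b = true} = Fintype.card β) :
    ((Fintype.card β : ℝ) ^ 2 - 2 * Fintype.card β - 1) / 8 ≤ numSwapPairs v w := by
  set k := Fintype.card β
  set N : Bool × Bool → ℕ := fun c => #{b | (v b, w b) = c}
  have hfiber (f : Bool × Bool → ℕ) : ∑ b, f (v b, w b) =
      N (true, true) * f (true, true) + N (true, false) * f (true, false) +
        (N (false, true) * f (false, true) + N (false, false) * f (false, false)) := by
    rw [sum_comp_eq_sum_card_fiber_mul, Fintype.sum_prod_type, Fintype.sum_bool, Fintype.sum_bool,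
      Fintype.sum_bool]
  have htot : N (true, true) + N (true, false) + (N (false, true) + N (false, false)) = k := by
    simpa using (hfiber fun _ => 1).symm
  have hv' : N (true, true) + N (true, false) = #{b | v b = true} := by
    rw [card_filter, hfiber fun c => if c.1 = true then 1 else 0]
    simp
  have hw' : N (true, true) + N (false, true) = #{b | w b = true} := by
    rw [card_filter, hfiber fun c => if c.2 = true then 1 else 0]
    simp
  have hdiag : N (true, true) + N (false, false) = #{b | v b = w b} := by
    rw [card_filter, hfiber fun c => if c.1 = c.2 then 1 else 0]
    simp
  have hpairs := card_filter_swap_eq_sum v w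
  simp only [Fintype.sum_prod_type, Fintype.sum_bool, Prod.swap_prod_mk] at hpairs
  have hsplit := two_mul_card_filter_lt_add_card_filter_diag (fun b₁ b₂ => v b₁ = w b₂ ∧ v b₂ = w b₁)
    fun _ _ h => ⟨h.2, h.1⟩
  simp only [and_self] at hsplit
  have hcount : 2 * numSwapPairs v w + (N (true, true) + N (false, false)) =
      N (true, true) ^ 2 + N (false, false) ^ 2 + 2 * (N (true, false) * N (false, true)) := by
    rw [numSwapPairs, hdiag, hsplit, hpairs]; ring
  generalize N (true, true) = p, N (true, false) = s, N (false, true) = t, N (false, false) = q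
    at htot hv' hw' hcount
  obtain rfl : s = t := by omega
  obtain rfl : p = q := by omega
  have hk : (k : ℝ) = 2 * (p + s) := by exact_mod_cast (by omega : k = 2 * (p + s))
  have hcount' : 2 * (numSwapPairs v w : ℝ) + 2 * p = 2 * p ^ 2 + 2 * s ^ 2 := by
    exact_mod_cast (by linarith : 2 * numSwapPairs v w + 2 * p = 2 * p ^ 2 + 2 * s ^ 2)
  -- the count `s² + p² - p`, with `k = 2 (p + s)`, is least at `p = (k + 1) / 4`
  rw [hk]
  nlinarith [sq_nonneg (4 * (p : ℝ) - 2 * (p + s) - 1)]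

/-- The number of quadruples spanning `C4` or `H₁`, by `spansC4_or_spansH1_iff`. -/
def numC4OrH1 (o : α → β → Bool) : ℕ :=
  #{q : α × α × β × β | q.1 < q.2.1 ∧ q.2.2.1 < q.2.2.2 ∧
    o q.1 q.2.2.1 = o q.2.1 q.2.2.2 ∧ o q.1 q.2.2.2 = o q.2.1 q.2.2.1}

theorem card_filter_lt_lt_eq_sum (P : α → α → β → β → Prop)
    [∀ a₁ a₂ b₁ b₂, Decidable (P a₁ a₂ b₁ b₂)] :
    #{q : α × α × β × β | q.1 < q.2.1 ∧ q.2.2.1 < q.2.2.2 ∧ P q.1 q.2.1 q.2.2.1 q.2.2.2} =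
      ∑ a : α × α with a.1 < a.2, #{b : β × β | b.1 < b.2 ∧ P a.1 a.2 b.1 b.2} := by
  calc #{q : α × α × β × β | q.1 < q.2.1 ∧ q.2.2.1 < q.2.2.2 ∧ P q.1 q.2.1 q.2.2.1 q.2.2.2}
      = #{x : (α × α) × (β × β) | x.1.1 < x.1.2 ∧ x.2.1 < x.2.2 ∧ P x.1.1 x.1.2 x.2.1 x.2.2} :=
        card_equiv (Equiv.prodAssoc _ _ _).symm fun q => by simp
    _ = _ := by
        rw [card_filter, Fintype.sum_prod_type, sum_filter]
        refine sum_congr rfl fun a _ => ?_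
        split_ifs with ha
        · simp only [ha, true_and, card_filter]
        · simp [ha]

theorem numC4OrH1_eq_sum (o : α → β → Bool) :
    numC4OrH1 o = ∑ a : α × α with a.1 < a.2, numSwapPairs (o a.1) (o a.2) :=
  card_filter_lt_lt_eq_sum fun a₁ a₂ b₁ b₂ => o a₁ b₁ = o a₂ b₂ ∧ o a₁ b₂ = o a₂ b₁

theorem numC4OrH1_transpose (o : α → β → Bool) : numC4OrH1 (fun b a => o a b) = numC4OrH1 o := by
  refine card_equiv (((Equiv.prodAssoc _ _ _).symm.trans (Equiv.prodComm _ _)).trans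
    (Equiv.prodAssoc _ _ _)) fun q => ?_
  obtain ⟨b₁, b₂, a₁, a₂⟩ := q
  simp only [Equiv.trans_apply, Equiv.prodAssoc_symm_apply, Equiv.prodComm_apply, Prod.swap_prod_mk,
    Equiv.prodAssoc_apply, mem_filter, mem_univ, true_and]
  constructor <;> rintro ⟨h₁, h₂, h₃, h₄⟩ <;> exact ⟨h₂, h₁, h₃, h₄.symm⟩

theorem choose_two_mul_le_numC4OrH1 (o : α → β → Bool)
    (ho : ∀ a, 2 * #{b | o a b = true} = Fintype.card β) :
    ((Fintype.card α).choose 2 : ℝ) * ((Fintype.card β : ℝ) ^ 2 - 2 * Fintype.card β - 1) / 8 ≤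
      numC4OrH1 o := by
  rw [numC4OrH1_eq_sum, ← card_filter_lt_eq_choose_two, Nat.cast_sum, mul_div_assoc,
    ← nsmul_eq_mul]
  exact card_nsmul_le_sum _ _ _ fun a _ => le_numSwapPairs _ _ (ho a.1) (ho a.2)

end Orientation

theorem numC4_add_numH1 {m n : ℕ} (o : Fin m → Fin n → Bool) :
    numC4 o + numH1 o = numC4OrH1 o := by
  rw [numC4, numH1, ← card_union_of_disjoint, ← filter_or]
  · refine congrArg card (filter_congr fun q _ => ?_)
    rw [← spansC4_or_spansH1_iff]
    tauto
  · exact disjoint_filter.2 fun q _ hC hH => not_spansC4_and_spansH1 o _ _ _ _ ⟨hC.2.2, hH.2.2⟩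

theorem numC4_add_numH1_lower_bound_general (m n : ℕ)
    (o : Fin m → Fin n → Bool) (ho : IsEulerianBip o) :
    (m.choose 2 : ℝ) * ((n : ℝ) ^ 2 - 2 * n - 1) / 8 +
      (n.choose 2 : ℝ) * ((m : ℝ) ^ 2 - 2 * m - 1) / 8 ≤
      2 * (numC4 o : ℝ) + 2 * (numH1 o : ℝ) := by
  have hrows := choose_two_mul_le_numC4OrH1 o (by simpa using ho.1)
  have hcols := choose_two_mul_le_numC4OrH1 (fun b a => o a b) (by simpa using ho.2)
  rw [numC4OrH1_transpose] at hcols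
  simp only [Fintype.card_fin] at hrows hcols
  have hsum : (numC4 o : ℝ) + numH1 o = numC4OrH1 o := by exact_mod_cast numC4_add_numH1 o
  linarith

/-- For an Eulerian orientation of `K_{m,n}` (`m`, `n` even), with `x` the number of
quadruples spanning a directed 4-cycle and `h₁` the number of quadruples spanning `H₁`,
one has `2x + 2h₁ ≥ C(m,2)·(n² − 2n − 1)/8 + C(n,2)·(m² − 2m − 1)/8`. -/
theorem numC4_add_numH1_lower_bound (m n : ℕ) (hm : Even m) (hn : Even n)
    (o : Fin m → Fin n → Bool) (ho : IsEulerianBip o) :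
    (m.choose 2 : ℝ) * ((n : ℝ) ^ 2 - 2 * n - 1) / 8 +
      (n.choose 2 : ℝ) * ((m : ℝ) ^ 2 - 2 * m - 1) / 8 ≤
      2 * (numC4 o : ℝ) + 2 * (numH1 o : ℝ) :=
  numC4_add_numH1_lower_bound_general m n o ho
end

section
/- In every Eulerian orientation of K_{m,n} (m, n even) there exists an arc that lies on at least mn/8 directed 4-cycles. -/
open Finset

/-- The number of directed 4-cycles of `o` (counted as subgraphs, each recorded once via
`a₁ < a₂`, `b₁ < b₂`) that contain the arc lying on the edge between `a` and `b` (directed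
according to `o`); a 4-cycle contains this arc precisely when `a` is one of its two left
vertices and `b` is one of its two right vertices. -/
def edgeC4Count {m n : ℕ} (o : Fin m → Fin n → Bool) (a : Fin m) (b : Fin n) : ℕ :=
  ((univ : Finset (Fin m × Fin m × Fin n × Fin n)).filter fun q =>
    q.1 < q.2.1 ∧ q.2.2.1 < q.2.2.2 ∧ SpansC4 o q.1 q.2.1 q.2.2.1 q.2.2.2 ∧
    (q.1 = a ∨ q.2.1 = a) ∧ (q.2.2.1 = b ∨ q.2.2.2 = b)).card

/-! Let `s(a, a')` count the directed paths `a → b → a'`. The directed 4-cycles on the left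
vertices `a, a'` correspond to pairs of paths `a → b → a'`, `a' → b' → a`, and `s` is symmetric
since all left vertices have the same outdegree; so the numbers of 4-cycles through the arcs add
up to `4 · #C4 = 2 ∑_{a, a'} s(a, a')²`. Counting paths by their middle vertex,
`∑ s(a, a') = n (m/2)²`, and Cauchy–Schwarz gives `∑ s(a, a')² ≥ (mn)² / 16`. Hence some of the
`mn` arcs lies on at least `mn/8` 4-cycles. -/

variable {m n : ℕ} (o : Fin m → Fin n → Bool)

def twoPathCount (a a' : Fin m) : ℕ :=
  #{b | o a b = true ∧ o a' b = false}

lemma card_filter_true_add_card_filter_false {α : Type*} [Fintype α] (f : α → Bool) :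
    #{x | f x = true} + #{x | f x = false} = Fintype.card α := by
  simpa only [Bool.not_eq_true, card_univ] using
    card_filter_add_card_filter_not (s := univ) (f · = true)

lemma twoPathCount_add_card_common (a a' : Fin m) :
    twoPathCount o a a' + #{b | o a b = true ∧ o a' b = true} = #{b | o a b = true} := by
  rw [← card_filter_add_card_filter_not (s := {b | o a b = true}) (fun b => o a' b = true),
    filter_filter, filter_filter, add_comm]
  simp only [twoPathCount, Bool.not_eq_true]

lemma twoPathCount_comm_of_card_eq {a a' : Fin m}
    (h : #{b | o a b = true} = #{b | o a' b = true}) :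
    twoPathCount o a a' = twoPathCount o a' a := by
  have h₁ := twoPathCount_add_card_common o a a'
  have h₂ := twoPathCount_add_card_common o a' a
  simp only [and_comm (a := o a' _ = true)] at h₂
  omega

lemma sum_twoPathCount :
    ∑ a, ∑ a', twoPathCount o a a' = ∑ b, #{a | o a b = true} * #{a | o a b = false} := by
  simp only [twoPathCount, card_filter, sum_mul_sum, ite_zero_mul_ite_zero, mul_one]
  exact (sum_congr rfl fun _ _ => sum_comm).trans sum_comm

lemma sq_sum_twoPathCount_le :
    (∑ a, ∑ a', twoPathCount o a a') ^ 2 ≤ m ^ 2 * ∑ a, ∑ a', twoPathCount o a a' ^ 2 := by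
  simpa only [← Fintype.sum_prod_type', card_univ, Fintype.card_prod, Fintype.card_fin,
    Nat.cast_id, sq] using
    sq_sum_le_card_mul_sum_sq (s := univ) (f := fun p : Fin m × Fin m => twoPathCount o p.1 p.2)

namespace SpansC4

variable {o} {a₁ a₂ : Fin m} {b₁ b₂ : Fin n}

lemma left_ne (h : SpansC4 o a₁ a₂ b₁ b₂) : a₁ ≠ a₂ := by
  rintro rfl
  unfold SpansC4 at h
  grind

lemma right_ne (h : SpansC4 o a₁ a₂ b₁ b₂) : b₁ ≠ b₂ := by
  rintro rfl
  unfold SpansC4 at h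
  grind

lemma min_max (h : SpansC4 o a₁ a₂ b₁ b₂) :
    SpansC4 o (min a₁ a₂) (max a₁ a₂) (min b₁ b₂) (max b₁ b₂) := by
  unfold SpansC4 at *
  rcases le_total a₁ a₂ with ha | ha <;> rcases le_total b₁ b₂ with hb | hb <;>
    simp only [min_eq_left, min_eq_right, max_eq_left, max_eq_right, ha, hb] <;> tauto

end SpansC4

lemma card_spansC4 (a a' : Fin m) :
    #{q : Fin n × Fin n | SpansC4 o a a' q.1 q.2} =
      2 * (twoPathCount o a a' * twoPathCount o a' a) := by
  set P : Finset (Fin n) := {b | o a b = true ∧ o a' b = false}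
  set Q : Finset (Fin n) := {b | o a' b = true ∧ o a b = false}
  have hsplit : ({q | SpansC4 o a a' q.1 q.2} : Finset (Fin n × Fin n)) = P ×ˢ Q ∪ Q ×ˢ P := by
    ext q
    simp only [P, Q, mem_filter, mem_univ, true_and, mem_union, mem_product]
    unfold SpansC4
    tauto
  have hdisj : Disjoint (P ×ˢ Q) (Q ×ˢ P) := by
    rw [disjoint_left]
    simp only [P, Q, mem_product, mem_filter, mem_univ, true_and]
    grind
  rw [hsplit, card_union_of_disjoint hdisj, card_product, card_product, mul_comm #Q, ← two_mul]
  rfl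

/-- The same count as `edgeC4Count`, with each 4-cycle through the arc indexed by its other left
vertex and its other right vertex instead of by its sorted vertex quadruple. -/
def orderedC4Count (a : Fin m) (b : Fin n) : ℕ :=
  #{p : Fin m × Fin n | SpansC4 o a p.1 b p.2}

lemma orderedC4Count_le_edgeC4Count (a : Fin m) (b : Fin n) :
    orderedC4Count o a b ≤ edgeC4Count o a b := by
  refine card_le_card_of_injOn (fun p => (min a p.1, max a p.1, min b p.2, max b p.2)) ?_ ?_
  · intro p hp
    simp only [coe_filter, mem_univ, true_and, Set.mem_ofPred_eq] at hp ⊢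
    refine ⟨min_lt_max.2 hp.left_ne, min_lt_max.2 hp.right_ne, hp.min_max, ?_, ?_⟩ <;> grind
  · intro p _ q _ h
    simp only [Prod.mk.injEq] at h
    ext <;> grind

lemma sum_orderedC4Count_eq_sum_card_spansC4 :
    ∑ a, ∑ b, orderedC4Count o a b =
      ∑ a, ∑ a', #{q : Fin n × Fin n | SpansC4 o a a' q.1 q.2} := by
  simp only [orderedC4Count, card_filter, Fintype.sum_prod_type]
  exact sum_congr rfl fun _ _ => sum_comm

namespace IsEulerianBip

variable {o}

lemma twoPathCount_comm (ho : IsEulerianBip o) (a a' : Fin m) :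
    twoPathCount o a a' = twoPathCount o a' a :=
  twoPathCount_comm_of_card_eq o (by have := ho.1 a; have := ho.1 a'; omega)

lemma four_mul_sum_twoPathCount (ho : IsEulerianBip o) :
    4 * ∑ a, ∑ a', twoPathCount o a a' = n * m ^ 2 := by
  have hb (b : Fin n) : 4 * (#{a | o a b = true} * #{a | o a b = false}) = m ^ 2 := by
    have h₁ := ho.2 b
    have h₂ := card_filter_true_add_card_filter_false (o · b)
    rw [Fintype.card_fin] at h₂
    nlinarith
  rw [sum_twoPathCount, mul_sum, sum_congr rfl fun b _ => hb b, sum_const, card_univ,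
    Fintype.card_fin, smul_eq_mul]

lemma sum_orderedC4Count (ho : IsEulerianBip o) :
    ∑ a, ∑ b, orderedC4Count o a b = 2 * ∑ a, ∑ a', twoPathCount o a a' ^ 2 := by
  simp only [sum_orderedC4Count_eq_sum_card_spansC4, card_spansC4, ← ho.twoPathCount_comm,
    mul_sum, sq]

lemma sq_mul_le_eight_mul_sum_orderedC4Count (ho : IsEulerianBip o) :
    (m * n) ^ 2 ≤ 8 * ∑ a, ∑ b, orderedC4Count o a b := by
  rcases Nat.eq_zero_or_pos m with rfl | hm
  · simp
  have hsum := ho.four_mul_sum_twoPathCount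
  have hcs := sq_sum_twoPathCount_le o
  rw [ho.sum_orderedC4Count]
  refine le_of_mul_le_mul_left ?_ (by positivity : 0 < m ^ 2)
  calc m ^ 2 * (m * n) ^ 2 = (4 * ∑ a, ∑ a', twoPathCount o a a') ^ 2 := by rw [hsum]; ring
    _ ≤ m ^ 2 * (8 * (2 * ∑ a, ∑ a', twoPathCount o a a' ^ 2)) := by nlinarith

end IsEulerianBip

theorem exists_arc_on_many_C4_general (m n : ℕ)
    (hm0 : 0 < m) (hn0 : 0 < n)
    (o : Fin m → Fin n → Bool) (ho : IsEulerianBip o) :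
    ∃ (a : Fin m) (b : Fin n), (m : ℝ) * n / 8 ≤ (edgeC4Count o a b : ℝ) := by
  have : Nonempty (Fin m × Fin n) := ⟨(⟨0, hm0⟩, ⟨0, hn0⟩)⟩
  have hsum : ∑ _p : Fin m × Fin n, m * n ≤
      ∑ p : Fin m × Fin n, 8 * orderedC4Count o p.1 p.2 := by
    simpa only [sum_const, card_univ, Fintype.card_prod, Fintype.card_fin, smul_eq_mul, ← sq,
      ← mul_sum, Fintype.sum_prod_type] using ho.sq_mul_le_eight_mul_sum_orderedC4Count
  obtain ⟨⟨a, b⟩, -, hab : m * n ≤ 8 * orderedC4Count o a b⟩ :=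
    exists_le_of_sum_le univ_nonempty hsum
  have hle := orderedC4Count_le_edgeC4Count o a b
  refine ⟨a, b, div_le_of_le_mul₀ (by norm_num) (by positivity) ?_⟩
  exact_mod_cast (show m * n ≤ edgeC4Count o a b * 8 by omega)

/-- In every Eulerian orientation of `K_{m,n}` (`m`, `n` even) there exists an arc lying
on at least `mn/8` directed 4-cycles. -/
theorem exists_arc_on_many_C4 (m n : ℕ) (hm : Even m) (hn : Even n)
    (hm0 : 0 < m) (hn0 : 0 < n)
    (o : Fin m → Fin n → Bool) (ho : IsEulerianBip o) :
    ∃ (a : Fin m) (b : Fin n), (m : ℝ) * n / 8 ≤ (edgeC4Count o a b : ℝ) :=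
  exists_arc_on_many_C4_general m n hm0 hn0 o ho
end

section
/- For every δ > 0 there exists N such that the following holds for every integer n > N that is a perfect square, with m = √n: for every regular tournament T on n vertices there exists a partition V₁, …, V_m of the vertex set of T such that for every vertex v and every index i ∈ {1, …, m}, the number of out-neighbors of v in V_i and the number of in-neighbors of v in V_i each lie between (1 − δ/4)·(n−1)/(2m) and (1 + δ/4)·(n−1)/(2m). -/
open Finset

/-- A tournament on `n` vertices: `o u v = true` means there is an arc from `u` to `v`.
Between any two distinct vertices there is exactly one arc, and there are no loops. -/
def IsTournament {n : ℕ} (o : Fin n → Fin n → Bool) : Prop :=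
  (∀ v : Fin n, o v v = false) ∧ ∀ u v : Fin n, u ≠ v → o u v = !o v u

/-- A regular tournament: every vertex has outdegree (and hence indegree) `(n-1)/2`. -/
def IsRegularTournament {n : ℕ} (o : Fin n → Fin n → Bool) : Prop :=
  IsTournament o ∧ ∀ v : Fin n, 2 * (univ.filter fun w : Fin n => o v w = true).card = n - 1

/-!
Colour the vertices uniformly at random with `m` colours, i.e. count over all `m ^ n` maps
`P : Fin n → Fin m`. For a set `S` with `#S ≤ m²` and a colour `i`, the deviation
`#(S ∩ P⁻¹ i) - #S / m` is a sum of independent centred indicators. Expanding its eighth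
power, only the `8`-tuples of `S` in which no vertex occurs exactly once survive averaging;
they involve at most `4` vertices, so the eighth moment is `O(m ^ 4)`. By Markov's inequality a
deviation of `t = (δ / 4) (n - 1) / (2m) ≥ δ m / 16` has probability `O(δ⁻⁸ m⁻⁴)`, and a union
bound over the `2 n m = 2 m³` pairs (in- or out-neighbourhood, colour) leaves a good colouring
as soon as `m ≫ δ⁻⁸`.
-/

section CenteredIndicator

variable {β : Type*} [Fintype β] [DecidableEq β]

noncomputable def centeredIndicator (i b : β) : ℝ :=
  (if b = i then 1 else 0) - (Fintype.card β : ℝ)⁻¹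

theorem sum_centeredIndicator (i : β) : ∑ b, centeredIndicator i b = 0 := by
  have : Nonempty β := ⟨i⟩
  have : (Fintype.card β : ℝ) ≠ 0 := by simp [Fintype.card_ne_zero]
  simp [centeredIndicator, sum_sub_distrib, this]

theorem abs_centeredIndicator_le_one (i b : β) : |centeredIndicator i b| ≤ 1 := by
  have hq : 1 ≤ (Fintype.card β : ℝ) := by
    have : Nonempty β := ⟨i⟩
    exact_mod_cast Fintype.card_pos (α := β)
  have h0 : 0 < (Fintype.card β : ℝ)⁻¹ := by positivity
  have h1 : (Fintype.card β : ℝ)⁻¹ ≤ 1 := inv_le_one_of_one_le₀ hq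
  rw [centeredIndicator, abs_le]
  split_ifs <;> constructor <;> linarith

theorem sum_centeredIndicator_sq (i : β) :
    ∑ b, centeredIndicator i b ^ 2 = 1 - (Fintype.card β : ℝ)⁻¹ := by
  have h : ∀ b, centeredIndicator i b ^ 2 = (if b = i then centeredIndicator i b else 0)
      - (Fintype.card β : ℝ)⁻¹ * centeredIndicator i b := fun b => by
    rw [sq]; nth_rewrite 1 [centeredIndicator]; split_ifs <;> ring
  rw [sum_congr rfl fun b _ => h b, sum_sub_distrib, sum_ite_eq', ← mul_sum,
    sum_centeredIndicator, mul_zero, sub_zero, centeredIndicator, if_pos (mem_univ i), if_pos rfl]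

theorem abs_sum_centeredIndicator_pow_le_one (i : β) {a : ℕ} (ha : 2 ≤ a) :
    |∑ b, centeredIndicator i b ^ a| ≤ 1 :=
  calc |∑ b, centeredIndicator i b ^ a|
      ≤ ∑ b, |centeredIndicator i b| ^ a := by
        simpa only [abs_pow] using abs_sum_le_sum_abs (fun b => centeredIndicator i b ^ a) univ
    _ ≤ ∑ b, |centeredIndicator i b| ^ 2 :=
        sum_le_sum fun b _ =>
          pow_le_pow_of_le_one (abs_nonneg _) (abs_centeredIndicator_le_one i b) ha
    _ = 1 - (Fintype.card β : ℝ)⁻¹ := by simp only [sq_abs, sum_centeredIndicator_sq]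
    _ ≤ 1 := by linarith [show 0 ≤ (Fintype.card β : ℝ)⁻¹ by positivity]

end CenteredIndicator

theorem sum_pi_prod_comp_eq_prod_sum_pow {ι α β R : Type*} [Fintype ι] [Fintype α]
    [DecidableEq α] [Fintype β] [CommSemiring R] (g : ι → α) (f : β → R) :
    ∑ P : α → β, ∏ j, f (P (g j)) = ∏ w, ∑ b, f b ^ #{j | g j = w} := by
  rw [Fintype.prod_sum]
  refine sum_congr rfl fun P _ => ?_
  rw [← prod_fiberwise univ g (fun j => f (P (g j)))]
  refine prod_congr rfl fun w _ => ?_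
  rw [prod_congr rfl fun j hj => by rw [(mem_filter.mp hj).2], prod_const]

section FiberCounts

variable {ι α : Type*} [Fintype ι] [DecidableEq α]

theorem card_filter_pos_of_mem_image {g : ι → α} {w : α} (hw : w ∈ univ.image g) :
    0 < #{j | g j = w} := by
  obtain ⟨j, -, rfl⟩ := mem_image.mp hw
  exact card_pos.mpr ⟨j, by simp⟩

theorem two_mul_card_image_le (g : ι → α) (hg : ∀ w, #{j | g j = w} ≠ 1) :
    2 * #(univ.image g) ≤ Fintype.card ι := by
  rw [← card_univ, card_eq_sum_card_image g univ, mul_comm, ← smul_eq_mul, ← sum_const]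
  refine sum_le_sum fun w hw => ?_
  have := card_filter_pos_of_mem_image hw
  have := hg w
  omega

theorem card_filter_card_image_eq_le [DecidableEq ι] (S : Finset α) (r : ℕ) :
    #{g ∈ Fintype.piFinset fun _ : ι => S | #(univ.image g) = r}
      ≤ (#S).choose r * r ^ Fintype.card ι := by
  calc _ ≤ #((powersetCard r S).biUnion fun T => Fintype.piFinset fun _ : ι => T) := by
        refine card_le_card fun g hg => ?_
        simp only [mem_filter, Fintype.mem_piFinset] at hg
        refine mem_biUnion.mpr ⟨univ.image g, mem_powersetCard.mpr ⟨?_, hg.2⟩,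
          Fintype.mem_piFinset.mpr fun j => mem_image_of_mem g (mem_univ j)⟩
        intro w hw
        obtain ⟨j, -, rfl⟩ := mem_image.mp hw
        exact hg.1 j
    _ ≤ ∑ T ∈ powersetCard r S, #(Fintype.piFinset fun _ : ι => T) := card_biUnion_le
    _ = ∑ T ∈ powersetCard r S, r ^ Fintype.card ι := sum_congr rfl fun T hT => by
        rw [Fintype.card_piFinset, prod_const, (mem_powersetCard.mp hT).2, card_univ]
    _ = (#S).choose r * r ^ Fintype.card ι := by
        rw [sum_const, card_powersetCard, smul_eq_mul]

end FiberCounts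

theorem sum_choose_mul_pow_le {s m n k : ℕ} (hm : 0 < m) (hs : s ≤ m ^ 2) (hsn : s ≤ n) :
    ∑ r ∈ range (k + 1), s.choose r * r ^ (2 * k) * m ^ (n - r)
      ≤ (k + 1) * k ^ (2 * k) * m ^ (n + k) := by
  calc _ ≤ ∑ _r ∈ range (k + 1), k ^ (2 * k) * m ^ (n + k) := sum_le_sum fun r hr => ?_
    _ = (k + 1) * k ^ (2 * k) * m ^ (n + k) := by rw [sum_const, card_range, smul_eq_mul, mul_assoc]
  rw [mem_range] at hr
  rcases lt_or_ge s r with hsr | hrs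
  · simp [Nat.choose_eq_zero_of_lt hsr]
  calc s.choose r * r ^ (2 * k) * m ^ (n - r)
      ≤ (m ^ 2) ^ r * k ^ (2 * k) * m ^ (n - r) := by
        gcongr
        · exact (Nat.choose_le_pow s r).trans (Nat.pow_le_pow_left hs r)
        · omega
    _ = k ^ (2 * k) * m ^ (n + r) := by
        rw [← pow_mul, mul_comm (m ^ (2 * r)), mul_assoc, ← pow_add]
        congr 2
        omega
    _ ≤ k ^ (2 * k) * m ^ (n + k) := by gcongr; omega

theorem card_filter_le_abs_mul_pow_le_sum {ι : Type*} (s : Finset ι) (f : ι → ℝ) {t : ℝ}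
    (ht : 0 ≤ t) (k : ℕ) :
    #{x ∈ s | t ≤ |f x|} * t ^ (2 * k) ≤ ∑ x ∈ s, f x ^ (2 * k) :=
  calc (#{x ∈ s | t ≤ |f x|} : ℝ) * t ^ (2 * k)
      = ∑ x ∈ s with t ≤ |f x|, t ^ (2 * k) := by
        rw [sum_const, nsmul_eq_mul]
    _ ≤ ∑ x ∈ s with t ≤ |f x|, f x ^ (2 * k) := sum_le_sum fun x hx => by
        rw [pow_mul, pow_mul, ← sq_abs (f x)]
        gcongr
        exact (mem_filter.mp hx).2
    _ ≤ ∑ x ∈ s, f x ^ (2 * k) :=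
        sum_le_sum_of_subset_of_nonneg (filter_subset _ _) fun x _ _ =>
          (even_two_mul k).pow_nonneg _

section Coloring

variable {α β : Type*} [Fintype β] [DecidableEq β]

noncomputable def deviation (P : α → β) (S : Finset α) (i : β) : ℝ :=
  #{w ∈ S | P w = i} - #S / Fintype.card β

theorem deviation_eq_sum_centeredIndicator (P : α → β) (S : Finset α) (i : β) :
    deviation P S i = ∑ w ∈ S, centeredIndicator i (P w) := by
  simp [deviation, centeredIndicator, sum_sub_distrib, sum_boole, div_eq_mul_inv]

variable [Fintype α] [DecidableEq α]

theorem abs_prod_sum_centeredIndicator_pow_le {ι : Type*} [Fintype ι] (g : ι → α) (i : β)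
    (hg : ∀ w, #{j | g j = w} ≠ 1) :
    |∏ w, ∑ b, centeredIndicator i b ^ #{j | g j = w}|
      ≤ (Fintype.card β : ℝ) ^ (Fintype.card α - #(univ.image g)) := by
  rw [abs_prod]
  calc ∏ w, |∑ b, centeredIndicator i b ^ #{j | g j = w}|
      ≤ ∏ w, if w ∈ univ.image g then 1 else (Fintype.card β : ℝ) := by
        refine prod_le_prod (fun _ _ => abs_nonneg _) fun w _ => ?_
        split_ifs with hw
        · have := card_filter_pos_of_mem_image hw
          exact abs_sum_centeredIndicator_pow_le_one i (by have := hg w; omega)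
        · have : #{j | g j = w} = 0 := by
            simpa [filter_eq_empty_iff] using hw
          simp [this]
    _ = _ := by
      rw [prod_ite, prod_const_one, one_mul, prod_const, ← card_compl]
      congr 2
      ext; simp

theorem sum_prod_centeredIndicator_comp_le {ι : Type*} [Fintype ι] (g : ι → α) (i : β) :
    ∑ P : α → β, ∏ j, centeredIndicator i (P (g j)) ≤
      if ∀ w, #{j | g j = w} ≠ 1 then
        (Fintype.card β : ℝ) ^ (Fintype.card α - #(univ.image g)) else 0 := by
  rw [sum_pi_prod_comp_eq_prod_sum_pow]
  split_ifs with hg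
  · exact (le_abs_self _).trans (abs_prod_sum_centeredIndicator_pow_le g i hg)
  · simp only [not_forall, not_not] at hg
    obtain ⟨w, hw⟩ := hg
    rw [prod_eq_zero (mem_univ w) (by rw [hw, sum_congr rfl fun b _ => pow_one _,
      sum_centeredIndicator])]

theorem sum_deviation_pow_le (S : Finset α) (i : β) (k : ℕ) :
    ∑ P : α → β, deviation P S i ^ (2 * k) ≤
      ∑ r ∈ range (k + 1),
        (((#S).choose r * r ^ (2 * k) * Fintype.card β ^ (Fintype.card α - r) : ℕ) : ℝ) := by
  set m := Fintype.card β
  set n := Fintype.card α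
  set G := {g ∈ Fintype.piFinset fun _ : Fin (2 * k) => S | ∀ w, #{j | g j = w} ≠ 1}
  calc ∑ P : α → β, deviation P S i ^ (2 * k)
      = ∑ g ∈ Fintype.piFinset fun _ : Fin (2 * k) => S,
          ∑ P : α → β, ∏ j, centeredIndicator i (P (g j)) := by
        simp_rw [deviation_eq_sum_centeredIndicator, sum_pow']
        exact sum_comm
    _ ≤ ∑ g ∈ Fintype.piFinset fun _ : Fin (2 * k) => S,
          if ∀ w, #{j | g j = w} ≠ 1 then (m : ℝ) ^ (n - #(univ.image g)) else 0 :=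
        sum_le_sum fun g _ => sum_prod_centeredIndicator_comp_le g i
    _ = ∑ g ∈ G, (m : ℝ) ^ (n - #(univ.image g)) := (sum_filter _ _).symm
    _ = ∑ r ∈ range (k + 1), ∑ g ∈ G with #(univ.image g) = r, (m : ℝ) ^ (n - r) := by
        rw [← sum_fiberwise_of_maps_to (g := fun g => #(univ.image g)) (t := range (k + 1))]
        · exact sum_congr rfl fun r _ => sum_congr rfl fun g hg => by rw [(mem_filter.mp hg).2]
        · intro g hg
          have := two_mul_card_image_le g (mem_filter.mp hg).2
          rw [Fintype.card_fin] at this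
          exact mem_range.mpr (by omega)
    _ ≤ ∑ r ∈ range (k + 1), (((#S).choose r * r ^ (2 * k) * m ^ (n - r) : ℕ) : ℝ) := by
        refine sum_le_sum fun r _ => ?_
        rw [sum_const, nsmul_eq_mul, Nat.cast_mul, Nat.cast_pow]
        gcongr
        calc #{g ∈ G | #(univ.image g) = r}
            ≤ #{g ∈ Fintype.piFinset fun _ : Fin (2 * k) => S | #(univ.image g) = r} :=
              card_le_card (filter_subset_filter _ (filter_subset _ _))
          _ ≤ (#S).choose r * r ^ (2 * k) := by
              simpa using card_filter_card_image_eq_le (ι := Fin (2 * k)) S r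

theorem card_abs_deviation_ge_mul_pow_le (S : Finset α) (hS : #S ≤ Fintype.card β ^ 2) (i : β)
    {t : ℝ} (ht : 0 ≤ t) (k : ℕ) :
    #{P : α → β | t ≤ |deviation P S i|} * t ^ (2 * k)
      ≤ (((k + 1) * k ^ (2 * k) * Fintype.card β ^ (Fintype.card α + k) : ℕ) : ℝ) :=
  calc _ ≤ ∑ P : α → β, deviation P S i ^ (2 * k) :=
        card_filter_le_abs_mul_pow_le_sum _ _ ht k
    _ ≤ _ := (sum_deviation_pow_le S i k).trans <| by
        have : Nonempty β := ⟨i⟩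
        rw [← Nat.cast_sum, Nat.cast_le]
        exact sum_choose_mul_pow_le Fintype.card_pos hS (card_le_univ S)

theorem exists_forall_abs_deviation_lt [Nonempty β] {E : Type*} [Fintype E] (S : E → Finset α)
    (hS : ∀ e, #(S e) ≤ Fintype.card β ^ 2) {t : ℝ} (ht : 0 < t) (k : ℕ)
    (h : Fintype.card E * ((k + 1) * k ^ (2 * k) * Fintype.card β ^ (k + 1) : ℝ) < t ^ (2 * k)) :
    ∃ P : α → β, ∀ e i, |deviation P (S e) i| < t := by
  set m := Fintype.card β
  set n := Fintype.card α
  set bad : E × β → Finset (α → β) := fun p => {P | t ≤ |deviation P (S p.1) p.2|}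
  by_contra! hall
  have hcover : (univ : Finset (α → β)) ⊆ univ.biUnion bad := fun P _ => by
    obtain ⟨e, i, hP⟩ := hall P
    exact mem_biUnion.mpr ⟨(e, i), mem_univ _, by simpa [bad] using hP⟩
  have hcount : (m : ℝ) ^ n * t ^ (2 * k)
      ≤ (m : ℝ) ^ n * (Fintype.card E * ((k + 1) * k ^ (2 * k) * m ^ (k + 1))) :=
    calc (m : ℝ) ^ n * t ^ (2 * k) = #(univ : Finset (α → β)) * t ^ (2 * k) := by
          simp [m, n]
      _ ≤ (∑ p, #(bad p) : ℕ) * t ^ (2 * k) := by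
          gcongr
          exact (card_le_card hcover).trans card_biUnion_le
      _ = ∑ p, #(bad p) * t ^ (2 * k) := by push_cast; rw [sum_mul]
      _ ≤ ∑ _p : E × β, (((k + 1) * k ^ (2 * k) * m ^ (n + k) : ℕ) : ℝ) :=
          sum_le_sum fun p _ => card_abs_deviation_ge_mul_pow_le _ (hS p.1) p.2 ht.le k
      _ = (m : ℝ) ^ n * (Fintype.card E * ((k + 1) * k ^ (2 * k) * m ^ (k + 1))) := by
          simp only [sum_const, card_univ, Fintype.card_prod, nsmul_eq_mul]
          push_cast
          ring
  have hm : (0 : ℝ) < (m : ℝ) ^ n := by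
    have : 0 < m := Fintype.card_pos
    positivity
  exact (lt_irrefl _) (hcount.trans_lt (mul_lt_mul_of_pos_left h hm))

end Coloring

theorem IsTournament.card_out_add_card_in {n : ℕ} {o : Fin n → Fin n → Bool}
    (h : IsTournament o) (v : Fin n) : #{w | o v w = true} + #{w | o w v = true} = n - 1 := by
  have hsplit := card_filter_add_card_filter_not (s := univ.erase v) (o v · = true)
  rw [card_erase_of_mem (mem_univ v), card_univ, Fintype.card_fin] at hsplit
  convert hsplit using 3 <;> ext w <;> by_cases hw : w = v
  · simp [hw, h.1]
  · simp [hw]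
  · simp [hw, h.1]
  · simp [hw, h.2 w v hw]

theorem IsRegularTournament.two_mul_card_in {n : ℕ} {o : Fin n → Fin n → Bool}
    (h : IsRegularTournament o) (v : Fin n) : 2 * #{w | o w v = true} = n - 1 := by
  have := h.1.card_out_add_card_in v
  have := h.2 v
  omega

theorem IsRegularTournament.exists_forall_abs_card_sub_lt {n m : ℕ} [NeZero m]
    {o : Fin n → Fin n → Bool} (ho : IsRegularTournament o) (hn : n ≤ m ^ 2)
    {t : ℝ} (ht : 0 < t) (k : ℕ)
    (h : (2 * n : ℝ) * ((k + 1) * k ^ (2 * k) * m ^ (k + 1)) < t ^ (2 * k)) :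
    ∃ P : Fin n → Fin m, ∀ v i,
      |(#{w | P w = i ∧ o v w = true} : ℝ) - ((n : ℝ) - 1) / (2 * m)| < t ∧
      |(#{w | P w = i ∧ o w v = true} : ℝ) - ((n : ℝ) - 1) / (2 * m)| < t := by
  let S : Fin n ⊕ Fin n → Finset (Fin n) :=
    Sum.elim (fun v => univ.filter (o v · = true)) (fun v => univ.filter (o · v = true))
  have hS : ∀ e, 2 * #(S e) = n - 1 := by
    rintro (v | v)
    exacts [ho.2 v, ho.two_mul_card_in v]
  obtain ⟨P, hP⟩ := exists_forall_abs_deviation_lt (β := Fin m) S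
    (fun e => by have := hS e; rw [Fintype.card_fin]; omega) ht k
    (by rwa [Fintype.card_sum, Fintype.card_fin, Fintype.card_fin, Nat.cast_add, ← two_mul])
  have hdev : ∀ e i,
      deviation P (S e) i = #{w ∈ S e | P w = i} - ((n : ℝ) - 1) / (2 * m) := by
    intro e i
    have h2 := hS e
    have : 1 ≤ n := by rcases e with v | v <;> exact v.pos
    rify [this] at h2
    rw [deviation, Fintype.card_fin, ← h2]
    field_simp
  simp only [hdev] at hP
  refine ⟨P, fun v i => ⟨?_, ?_⟩⟩
  · simpa only [S, Sum.elim_inl, filter_filter, and_comm] using hP (.inl v) i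
  · simpa only [S, Sum.elim_inr, filter_filter, and_comm] using hP (.inr v) i

theorem eventually_two_mul_sq_mul_lt_pow {δ : ℝ} (hδ : 0 < δ) :
    ∀ᶠ m : ℕ in Filter.atTop, (2 * (m * m) : ℝ) * ((4 + 1) * 4 ^ (2 * 4) * m ^ (4 + 1))
      < (δ / 4 * (((m * m : ℝ) - 1) / (2 * m))) ^ (2 * 4) := by
  filter_upwards [Filter.eventually_ge_atTop 2,
    tendsto_natCast_atTop_atTop.eventually_gt_atTop (10 * 64 ^ 8 / δ ^ 8)] with m hm hδm
  -- the left side is `10 * 4 ^ 8 * m ^ 7`, and `t ≥ δ m / 16`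
  rw [div_lt_iff₀ (by positivity)] at hδm
  have hm' : (2 : ℝ) ≤ m := by exact_mod_cast hm
  have hc : (m : ℝ) / 4 ≤ ((m * m : ℝ) - 1) / (2 * m) := by
    rw [div_le_div_iff₀ (by norm_num) (by positivity)]
    nlinarith
  calc (2 * (m * m) : ℝ) * ((4 + 1) * 4 ^ (2 * 4) * m ^ (4 + 1))
      = 10 * 64 ^ 8 * m ^ 7 / 16 ^ 8 := by ring
    _ < m * δ ^ 8 * m ^ 7 / 16 ^ 8 := by gcongr
    _ = (δ / 4 * (m / 4)) ^ (2 * 4) := by ring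
    _ ≤ (δ / 4 * (((m * m : ℝ) - 1) / (2 * m))) ^ (2 * 4) := by gcongr

/-- For every `δ > 0` there exists `N` such that for every perfect square `n > N`, say
`n = m²`, and every regular tournament on `n` vertices, there is a partition of the vertex
set into classes `V₁, …, V_m` (the fibers of `P`) such that for every vertex `v` and every
index `i`, the number of out-neighbors of `v` in `V_i` and the number of in-neighbors of `v`
in `V_i` both lie between `(1 − δ/4)·(n−1)/(2m)` and `(1 + δ/4)·(n−1)/(2m)`. -/
theorem regular_tournament_balanced_partition :
    ∀ δ : ℝ, 0 < δ → ∃ N : ℕ, ∀ n : ℕ, N < n → ∀ m : ℕ, n = m * m →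
      ∀ o : Fin n → Fin n → Bool, IsRegularTournament o →
        ∃ P : Fin n → Fin m, ∀ v : Fin n, ∀ i : Fin m,
          ((1 - δ / 4) * ((n : ℝ) - 1) / (2 * m) ≤
              ((univ.filter fun w : Fin n => P w = i ∧ o v w = true).card : ℝ) ∧
            ((univ.filter fun w : Fin n => P w = i ∧ o v w = true).card : ℝ) ≤
              (1 + δ / 4) * ((n : ℝ) - 1) / (2 * m)) ∧
          ((1 - δ / 4) * ((n : ℝ) - 1) / (2 * m) ≤
              ((univ.filter fun w : Fin n => P w = i ∧ o w v = true).card : ℝ) ∧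
            ((univ.filter fun w : Fin n => P w = i ∧ o w v = true).card : ℝ) ≤
              (1 + δ / 4) * ((n : ℝ) - 1) / (2 * m)) := by
  intro δ hδ
  obtain ⟨K, hK⟩ := Filter.eventually_atTop.mp
    ((Filter.eventually_ge_atTop 2).and (eventually_two_mul_sq_mul_lt_pow hδ))
  refine ⟨K * K, fun n hn m hnm o ho => ?_⟩
  obtain ⟨hm, hbound⟩ := hK m (by nlinarith)
  have : NeZero m := ⟨by omega⟩
  have hn : (n : ℝ) = m * m := by rw [hnm]; push_cast; ring
  have hc : 0 < ((n : ℝ) - 1) / (2 * m) := by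
    have : (2 : ℝ) ≤ m := by exact_mod_cast hm
    have : (0 : ℝ) < n - 1 := by rw [hn]; nlinarith
    positivity
  obtain ⟨P, hP⟩ := ho.exists_forall_abs_card_sub_lt (m := m) (by rw [hnm, sq])
    (t := δ / 4 * (((n : ℝ) - 1) / (2 * m))) (by positivity) 4 (by rw [hn]; exact hbound)
  refine ⟨P, fun v i => ?_⟩
  obtain ⟨hout, hin⟩ := hP v i
  rw [abs_lt] at hout hin
  simp only [mul_div_assoc]
  exact ⟨⟨by linarith, by linarith⟩, by linarith, by linarith⟩
end

section
/- Let G be an Eulerian orientation of K_{m,n} (m, n even) with vertex classes A (|A| = m) and B (|B| = n), and let e = (x,y) be an arc of G with x ∈ A and y ∈ B. Let d(e) be the number of arcs of G from N⁺(y) to N⁻(x). Then the number of arcs from N⁻(x) to N⁺(y), the number of arcs from N⁺(x) to N⁻(y), the number of arcs from N⁻(y) to N⁻(x), and the number of arcs from N⁺(y) to N⁺(x) are all equal, and each equals mn/4 − d(e). -/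
open Finset

lemma prod_count {m n : ℕ} (P : Fin m → Prop) (Q : Fin n → Prop)
    [DecidablePred P] [DecidablePred Q] :
    ((univ : Finset (Fin m × Fin n)).filter fun p => P p.1 ∧ Q p.2).card
      = (univ.filter P).card * (univ.filter Q).card := by
  rw [← Finset.univ_product_univ, Finset.filter_product, Finset.card_product]

lemma split3 {α : Type*} [Fintype α] (P : α → Prop) (f : α → Bool) [DecidablePred P] :
    ((univ : Finset α).filter fun x => P x ∧ f x = true).card
      + ((univ : Finset α).filter fun x => P x ∧ f x = false).card
      = (univ.filter P).card := by
  classical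
  have := Finset.card_filter_add_card_filter_not (s := univ.filter P)
    (p := fun x => f x = true)
  simp only [Finset.filter_filter, Bool.not_eq_true] at this
  exact this

lemma row_count {m n : ℕ} (o : Fin m → Fin n → Bool) (P : Fin m → Prop) [DecidablePred P]
    (h : ∀ a, 2 * ((univ : Finset (Fin n)).filter fun b => o a b = true).card = n) :
    2 * ((univ : Finset (Fin m × Fin n)).filter fun p => P p.1 ∧ o p.1 p.2 = true).card
      = (univ.filter P).card * n := by
  classical
  rw [Finset.card_filter, Fintype.sum_prod_type, Finset.mul_sum]
  have key : ∀ a' : Fin m, (2 * ∑ b', (if P a' ∧ o a' b' = true then 1 else 0) : ℕ)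
      = if P a' then n else 0 := by
    intro a'
    by_cases hP : P a'
    · simp only [hP, true_and, if_true]
      rw [← Finset.card_filter, h a']
    · simp [hP]
  simp_rw [key]
  rw [← Finset.sum_filter, Finset.sum_const, smul_eq_mul]

lemma col_count {m n : ℕ} (o : Fin m → Fin n → Bool) (Q : Fin n → Prop) [DecidablePred Q]
    (h : ∀ b, 2 * ((univ : Finset (Fin m)).filter fun a => o a b = true).card = m) :
    2 * ((univ : Finset (Fin m × Fin n)).filter fun p => Q p.2 ∧ o p.1 p.2 = true).card
      = (univ.filter Q).card * m := by
  classical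
  rw [Finset.card_filter, Fintype.sum_prod_type_right, Finset.mul_sum]
  have key : ∀ b' : Fin n, (2 * ∑ a', (if Q b' ∧ o a' b' = true then 1 else 0) : ℕ)
      = if Q b' then m else 0 := by
    intro b'
    by_cases hQ : Q b'
    · simp only [hQ, true_and, if_true]
      rw [← Finset.card_filter, h b']
    · simp [hQ]
  simp_rw [key]
  rw [← Finset.sum_filter, Finset.sum_const, smul_eq_mul]

/-- Let `G` be an Eulerian orientation of `K_{m,n}` (`m`, `n` even) and let `e = (x, y)` be
an arc of `G` with `x = a ∈ A` and `y = b ∈ B` (so `o a b = true`).  Here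
`N⁺(b) = {a' | o a' b = false}`, `N⁻(a) = {b' | o a b' = false}`,
`N⁻(b) = {a' | o a' b = true}`, `N⁺(a) = {b' | o a b' = true}`, and `d(e)` is the number of
arcs from `N⁺(y) = N⁺(b)` to `N⁻(x) = N⁻(a)`.  Then the number of arcs from `N⁻(x)` to
`N⁺(y)`, from `N⁺(x)` to `N⁻(y)`, from `N⁻(y)` to `N⁻(x)`, and from `N⁺(y)` to `N⁺(x)` are
all equal, each being `mn/4 − d(e)`. -/
theorem four_arc_sets_eq (m n : ℕ) (hm : Even m) (hn : Even n)
    (o : Fin m → Fin n → Bool) (ho : IsEulerianBip o)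
    (a : Fin m) (b : Fin n) (hab : o a b = true)
    (d : ℕ)
    (hd : d = ((univ : Finset (Fin m × Fin n)).filter fun p =>
      o p.1 b = false ∧ o a p.2 = false ∧ o p.1 p.2 = true).card) :
    -- arcs from `N⁻(x)` to `N⁺(y)` (tails in `N⁻(a) ⊆ B`, heads in `N⁺(b) ⊆ A`)
    ((((univ : Finset (Fin m × Fin n)).filter fun p =>
        o p.1 b = false ∧ o a p.2 = false ∧ o p.1 p.2 = false).card : ℝ) =
      (m : ℝ) * n / 4 - d) ∧
    -- arcs from `N⁺(x)` to `N⁻(y)` (tails in `N⁺(a) ⊆ B`, heads in `N⁻(b) ⊆ A`)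
    ((((univ : Finset (Fin m × Fin n)).filter fun p =>
        o p.1 b = true ∧ o a p.2 = true ∧ o p.1 p.2 = false).card : ℝ) =
      (m : ℝ) * n / 4 - d) ∧
    -- arcs from `N⁻(y)` to `N⁻(x)` (tails in `N⁻(b) ⊆ A`, heads in `N⁻(a) ⊆ B`)
    ((((univ : Finset (Fin m × Fin n)).filter fun p =>
        o p.1 b = true ∧ o a p.2 = false ∧ o p.1 p.2 = true).card : ℝ) =
      (m : ℝ) * n / 4 - d) ∧
    -- arcs from `N⁺(y)` to `N⁺(x)` (tails in `N⁺(b) ⊆ A`, heads in `N⁺(a) ⊆ B`)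
    ((((univ : Finset (Fin m × Fin n)).filter fun p =>
        o p.1 b = false ∧ o a p.2 = true ∧ o p.1 p.2 = true).card : ℝ) =
      (m : ℝ) * n / 4 - d) := by
  
  classical
  obtain ⟨hrow, hcol⟩ := ho
  have hpm : 2 * ((univ : Finset (Fin m)).filter fun a' => o a' b = true).card = m := hcol b
  have hqn : 2 * ((univ : Finset (Fin n)).filter fun b' => o a b' = true).card = n := hrow a
  have hpp' : ((univ : Finset (Fin m)).filter fun a' => o a' b = true).card
      + ((univ : Finset (Fin m)).filter fun a' => o a' b = false).card = m := by
    have := Finset.card_filter_add_card_filter_not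
      (s := (univ : Finset (Fin m))) (p := fun a' => o a' b = true)
    simpa [Bool.not_eq_true] using this
  have hqq' : ((univ : Finset (Fin n)).filter fun b' => o a b' = true).card
      + ((univ : Finset (Fin n)).filter fun b' => o a b' = false).card = n := by
    have := Finset.card_filter_add_card_filter_not
      (s := (univ : Finset (Fin n))) (p := fun b' => o a b' = true)
    simpa [Bool.not_eq_true] using this
  have hperm : ∀ k₁ k₂ k₃ : Bool,
      ((univ : Finset (Fin m × Fin n)).filter fun p =>
        (o p.1 b = k₁ ∧ o p.1 p.2 = k₃) ∧ o a p.2 = k₂)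
      = (univ : Finset (Fin m × Fin n)).filter fun p =>
        o p.1 b = k₁ ∧ o a p.2 = k₂ ∧ o p.1 p.2 = k₃ := by
    intro k₁ k₂ k₃; apply Finset.filter_congr; intro x _; tauto
  have hperm2 : ∀ k₁ k₂ k₃ : Bool,
      ((univ : Finset (Fin m × Fin n)).filter fun p =>
        (o a p.2 = k₂ ∧ o p.1 p.2 = k₃) ∧ o p.1 b = k₁)
      = (univ : Finset (Fin m × Fin n)).filter fun p =>
        o p.1 b = k₁ ∧ o a p.2 = k₂ ∧ o p.1 p.2 = k₃ := by
    intro k₁ k₂ k₃; apply Finset.filter_congr; intro x _; tauto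
  have hsplit : ∀ k₁ k₂ : Bool,
      ((univ : Finset (Fin m × Fin n)).filter fun p =>
        o p.1 b = k₁ ∧ o a p.2 = k₂ ∧ o p.1 p.2 = true).card
      + ((univ : Finset (Fin m × Fin n)).filter fun p =>
        o p.1 b = k₁ ∧ o a p.2 = k₂ ∧ o p.1 p.2 = false).card
      = ((univ : Finset (Fin m)).filter fun a' => o a' b = k₁).card
        * ((univ : Finset (Fin n)).filter fun b' => o a b' = k₂).card := by
    intro k₁ k₂
    have h1 := split3 (fun p : Fin m × Fin n => o p.1 b = k₁ ∧ o a p.2 = k₂)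
      (fun p => o p.1 p.2)
    have h2 := prod_count (fun a' : Fin m => o a' b = k₁) (fun b' : Fin n => o a b' = k₂)
    simp only [and_assoc] at h1
    rw [h2] at h1
    exact h1
  have hrowc : ∀ k₁ : Bool,
      2 * (((univ : Finset (Fin m × Fin n)).filter fun p =>
          o p.1 b = k₁ ∧ o a p.2 = true ∧ o p.1 p.2 = true).card
        + ((univ : Finset (Fin m × Fin n)).filter fun p =>
          o p.1 b = k₁ ∧ o a p.2 = false ∧ o p.1 p.2 = true).card)
      = ((univ : Finset (Fin m)).filter fun a' => o a' b = k₁).card * n := by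
    intro k₁
    have h1 := split3 (fun p : Fin m × Fin n => o p.1 b = k₁ ∧ o p.1 p.2 = true)
      (fun p => o a p.2)
    have h2 := row_count o (fun a' => o a' b = k₁) hrow
    rw [hperm k₁ true true, hperm k₁ false true] at h1
    rw [h1]
    exact h2
  have hcolc : ∀ k₂ : Bool,
      2 * (((univ : Finset (Fin m × Fin n)).filter fun p =>
          o p.1 b = true ∧ o a p.2 = k₂ ∧ o p.1 p.2 = true).card
        + ((univ : Finset (Fin m × Fin n)).filter fun p =>
          o p.1 b = false ∧ o a p.2 = k₂ ∧ o p.1 p.2 = true).card)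
      = ((univ : Finset (Fin n)).filter fun b' => o a b' = k₂).card * m := by
    intro k₂
    have h1 := split3 (fun p : Fin m × Fin n => o a p.2 = k₂ ∧ o p.1 p.2 = true)
      (fun p => o p.1 b)
    have h2 := col_count o (fun b' => o a b' = k₂) hcol
    rw [hperm2 true k₂ true, hperm2 false k₂ true] at h1
    rw [h1]
    exact h2
  have E1 := hsplit false false
  have E2 := hsplit true true
  have E3 := hrowc false
  have E4 := hrowc true
  have E5 := hcolc false
  have hpmR : (2 : ℝ) * (((univ : Finset (Fin m)).filter fun a' => o a' b = true).card : ℝ) = m := by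
    exact_mod_cast hpm
  have hqnR : (2 : ℝ) * (((univ : Finset (Fin n)).filter fun b' => o a b' = true).card : ℝ) = n := by
    exact_mod_cast hqn
  have hpp'R : (((univ : Finset (Fin m)).filter fun a' => o a' b = true).card : ℝ)
      + (((univ : Finset (Fin m)).filter fun a' => o a' b = false).card : ℝ) = m := by
    exact_mod_cast hpp'
  have hqq'R : (((univ : Finset (Fin n)).filter fun b' => o a b' = true).card : ℝ)
      + (((univ : Finset (Fin n)).filter fun b' => o a b' = false).card : ℝ) = n := by
    exact_mod_cast hqq'
  have E1R : (((univ : Finset (Fin m × Fin n)).filter fun p =>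
      o p.1 b = false ∧ o a p.2 = false ∧ o p.1 p.2 = true).card : ℝ) + (((univ : Finset (Fin m × Fin n)).filter fun p =>
      o p.1 b = false ∧ o a p.2 = false ∧ o p.1 p.2 = false).card : ℝ)
      = (((univ : Finset (Fin m)).filter fun a' => o a' b = false).card : ℝ)
        * (((univ : Finset (Fin n)).filter fun b' => o a b' = false).card : ℝ) := by
    exact_mod_cast E1
  have E2R : (((univ : Finset (Fin m × Fin n)).filter fun p =>
      o p.1 b = true ∧ o a p.2 = true ∧ o p.1 p.2 = true).card : ℝ) + (((univ : Finset (Fin m × Fin n)).filter fun p =>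
      o p.1 b = true ∧ o a p.2 = true ∧ o p.1 p.2 = false).card : ℝ)
      = (((univ : Finset (Fin m)).filter fun a' => o a' b = true).card : ℝ)
        * (((univ : Finset (Fin n)).filter fun b' => o a b' = true).card : ℝ) := by
    exact_mod_cast E2
  have E3R : (2 : ℝ) * ((((univ : Finset (Fin m × Fin n)).filter fun p =>
      o p.1 b = false ∧ o a p.2 = true ∧ o p.1 p.2 = true).card : ℝ) + (((univ : Finset (Fin m × Fin n)).filter fun p =>
      o p.1 b = false ∧ o a p.2 = false ∧ o p.1 p.2 = true).card : ℝ))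
      = (((univ : Finset (Fin m)).filter fun a' => o a' b = false).card : ℝ) * n := by
    exact_mod_cast E3
  have E4R : (2 : ℝ) * ((((univ : Finset (Fin m × Fin n)).filter fun p =>
      o p.1 b = true ∧ o a p.2 = true ∧ o p.1 p.2 = true).card : ℝ) + (((univ : Finset (Fin m × Fin n)).filter fun p =>
      o p.1 b = true ∧ o a p.2 = false ∧ o p.1 p.2 = true).card : ℝ))
      = (((univ : Finset (Fin m)).filter fun a' => o a' b = true).card : ℝ) * n := by
    exact_mod_cast E4
  have E5R : (2 : ℝ) * ((((univ : Finset (Fin m × Fin n)).filter fun p =>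
      o p.1 b = true ∧ o a p.2 = false ∧ o p.1 p.2 = true).card : ℝ) + (((univ : Finset (Fin m × Fin n)).filter fun p =>
      o p.1 b = false ∧ o a p.2 = false ∧ o p.1 p.2 = true).card : ℝ))
      = (((univ : Finset (Fin n)).filter fun b' => o a b' = false).card : ℝ) * m := by
    exact_mod_cast E5
  have hdR : (d : ℝ) = (((univ : Finset (Fin m × Fin n)).filter fun p =>
      o p.1 b = false ∧ o a p.2 = false ∧ o p.1 p.2 = true).card : ℝ) := by exact_mod_cast hd
  clear E1 E2 E3 E4 E5 hpm hqn hpp' hqq' hd hsplit hrowc hcolc hperm hperm2 hrow hcol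
  set sp : ℝ := (((univ : Finset (Fin m)).filter fun a' => o a' b = true).card : ℝ) with hsp
  set sp' : ℝ := (((univ : Finset (Fin m)).filter fun a' => o a' b = false).card : ℝ) with hsp'
  set sq : ℝ := (((univ : Finset (Fin n)).filter fun b' => o a b' = true).card : ℝ) with hsq
  set sq' : ℝ := (((univ : Finset (Fin n)).filter fun b' => o a b' = false).card : ℝ) with hsq'
  set r1 : ℝ := (((univ : Finset (Fin m × Fin n)).filter fun p =>
      o p.1 b = false ∧ o a p.2 = false ∧ o p.1 p.2 = true).card : ℝ) with hr1
  set r2 : ℝ := (((univ : Finset (Fin m × Fin n)).filter fun p =>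
      o p.1 b = false ∧ o a p.2 = false ∧ o p.1 p.2 = false).card : ℝ) with hr2
  set r3 : ℝ := (((univ : Finset (Fin m × Fin n)).filter fun p =>
      o p.1 b = true ∧ o a p.2 = true ∧ o p.1 p.2 = true).card : ℝ) with hr3
  set r4 : ℝ := (((univ : Finset (Fin m × Fin n)).filter fun p =>
      o p.1 b = true ∧ o a p.2 = true ∧ o p.1 p.2 = false).card : ℝ) with hr4
  set r5 : ℝ := (((univ : Finset (Fin m × Fin n)).filter fun p =>
      o p.1 b = false ∧ o a p.2 = true ∧ o p.1 p.2 = true).card : ℝ) with hr5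
  set r6 : ℝ := (((univ : Finset (Fin m × Fin n)).filter fun p =>
      o p.1 b = true ∧ o a p.2 = false ∧ o p.1 p.2 = true).card : ℝ) with hr6
  clear_value sp sp' sq sq' r1 r2 r3 r4 r5 r6
  clear hr1 hr2 hr3 hr4 hr5 hr6 hsp hsp' hsq hsq'
  refine ⟨?_, ?_, ?_, ?_⟩
  · nlinarith [E1R, hpmR, hqnR, hpp'R, hqq'R, hdR]
  · nlinarith [E2R, E4R, E5R, hpmR, hqnR, hpp'R, hqq'R, hdR]
  · nlinarith [E5R, hpmR, hqnR, hpp'R, hqq'R, hdR]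
  · nlinarith [E3R, hpmR, hqnR, hpp'R, hqq'R, hdR]
end
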